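/- arXiv:math/0510298 — 11 statements merged into one kernel-verified Lean document; each statement's English description precedes it below -/
import Mathlib

section
/- In a left F-quasigroup (Q,·), the map α defined by x·α(x) = x is an endomorphism of (Q,·), and α commutes with β, where β(x)·x = x. -/
universe u

class Quasigroup (Q : Type u) extends Mul Q where
  mulLeft_bijective : ∀ a : Q, Function.Bijective (fun x => a * x)
  mulRight_bijective : ∀ a : Q, Function.Bijective (fun x => x * a)

theorem alpha_endomorphism_and_commutes (Q : Type u) [Quasigroup Q] (α β : Q → Q)
    (hα : ∀ x : Q, x * α x = x) (hβ : ∀ x : Q, β x * x = x)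
    (hF : ∀ x y z : Q, x * (y * z) = (x * y) * (α x * z)) :
    (∀ x y : Q, α (x * y) = α x * α y) ∧ (∀ x : Q, α (β x) = β (α x)) := by
  have lcancel : ∀ a x y : Q, a * x = a * y → x = y := fun a x y h =>
    (Quasigroup.mulLeft_bijective a).1 h
  have rcancel : ∀ a x y : Q, x * a = y * a → x = y := fun a x y h =>
    (Quasigroup.mulRight_bijective a).1 h
  constructor
  · intro x y
    apply lcancel (x * y)
    rw [hα (x * y), ← hF, hα y]
  · intro x
    apply rcancel (α x)
    rw [hβ (α x)]
    apply lcancel x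
    rw [hα x]
    have h1 := hF (β x) x (α x)
    rw [hα x, hβ x] at h1
    exact h1.symm
end

section
/- In a left F-quasigroup (Q,·), the translations R_a and L_b commute if and only if α(b) = β(a), where α(b) is the local right unit of b and β(a) the local left unit of a. In particular R_{α(a)} and L_{β(a)} always commute. -/
universe u

theorem translations_commute_iff (Q : Type u) [Quasigroup Q] (α β : Q → Q)
    (hα : ∀ x : Q, x * α x = x) (hβ : ∀ x : Q, β x * x = x)
    (hF : ∀ x y z : Q, x * (y * z) = (x * y) * (α x * z)) :
    (∀ a b : Q, (∀ x : Q, (b * x) * a = b * (x * a)) ↔ α b = β a) ∧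
      (∀ a x : Q, (β a * x) * α a = β a * (x * α a)) := by
  have hl : ∀ a x y : Q, a * x = a * y → x = y := fun a x y h =>
    (Quasigroup.mulLeft_bijective a).1 h
  have hr : ∀ a x y : Q, x * a = y * a → x = y := fun a x y h =>
    (Quasigroup.mulRight_bijective a).1 h
  have key : ∀ a : Q, α (β a) * α a = α a := by
    intro a
    have h1 : β a * (a * α a) = (β a * a) * (α (β a) * α a) := hF _ _ _
    rw [hα, hβ] at h1
    exact hl a _ _ (h1.symm.trans (hα a).symm)
  constructor
  · intro a b
    constructor
    · intro h
      have h1 : (b * a) * a = (b * a) * (α b * a) := (h a).trans (hF b a a)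
      have h2 : a = α b * a := hl _ _ _ h1
      exact hr a _ _ (h2.symm.trans (hβ a).symm)
    · intro h x
      rw [hF b x a, h, hβ a]
  · intro a x
    rw [hF, key]
end

section
/- A quasigroup (Q,·) is distributive if and only if it is an idempotent F-quasigroup. -/
universe u

theorem distributive_iff_idempotent_F (Q : Type u) [Quasigroup Q] (α β : Q → Q)
    (hα : ∀ x : Q, x * α x = x) (hβ : ∀ x : Q, β x * x = x) :
    ((∀ x y z : Q, x * (y * z) = (x * y) * (x * z)) ∧
        (∀ x y z : Q, (z * y) * x = (z * x) * (y * x))) ↔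
      ((∀ x : Q, x * x = x) ∧
        (∀ x y z : Q, x * (y * z) = (x * y) * (α x * z)) ∧
        (∀ x y z : Q, (z * y) * x = (z * β x) * (y * x))) := by
  have lc : ∀ a x y : Q, a * x = a * y → x = y :=
    fun a x y h => (Quasigroup.mulLeft_bijective a).1 h
  have rc : ∀ a x y : Q, x * a = y * a → x = y :=
    fun a x y h => (Quasigroup.mulRight_bijective a).1 h
  constructor
  · rintro ⟨hl, hr⟩
    -- β (y*x) = β y * x
    have hβ' : ∀ x y : Q, β (y * x) = β y * x := by
      intro x y
      apply rc (y * x)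
      rw [hβ (y * x)]
      have := hr x y (β y)
      rw [hβ y] at this
      exact this
    have idem : ∀ x : Q, x * x = x := by
      intro x
      have h1 : β (x * x) = x := by rw [hβ' x x, hβ x]
      have h2 : x * (x * x) = x * x := by
        have := hβ (x * x); rw [h1] at this; exact this
      have h3 : (x * x) * (x * x) = x * x := by rw [← hl x x x]; exact h2
      exact (rc (x * x) x (x * x) (h2.trans h3.symm)).symm
    have hαx : ∀ x : Q, α x = x := fun x => lc x _ _ ((hα x).trans (idem x).symm)
    have hβx : ∀ x : Q, β x = x := fun x => rc x _ _ ((hβ x).trans (idem x).symm)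
    refine ⟨idem, fun x y z => ?_, fun x y z => ?_⟩
    · rw [hαx]; exact hl x y z
    · rw [hβx]; exact hr x y z
  · rintro ⟨idem, h1, h2⟩
    have hαx : ∀ x : Q, α x = x := fun x => lc x _ _ ((hα x).trans (idem x).symm)
    have hβx : ∀ x : Q, β x = x := fun x => rc x _ _ ((hβ x).trans (idem x).symm)
    refine ⟨fun x y z => ?_, fun x y z => ?_⟩
    · have := h1 x y z; rwa [hαx] at this
    · have := h2 x y z; rwa [hβx] at this
end

section
/- In a Moufang loop (Q,+), the commutant C(Q) equals the Moufang center K(Q) and also equals M(Q) = {a : (x+a)+(y+x) = (x+y)+(a+x) for all x,y}. -/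
universe u

class Loop (Q : Type u) extends Add Q, Zero Q where
  addLeft_bijective : ∀ a : Q, Function.Bijective (fun x => a + x)
  addRight_bijective : ∀ a : Q, Function.Bijective (fun x => x + a)
  zero_add : ∀ a : Q, 0 + a = a
  add_zero : ∀ a : Q, a + 0 = a

/-- The commutant `C(Q)` of a loop. -/
def commutant (Q : Type u) [Loop Q] : Set Q := {a | ∀ x, a + x = x + a}

/-- The Moufang center `K(Q)` of a loop. -/
def moufangCenter (Q : Type u) [Loop Q] : Set Q :=
  {a | ∀ x y, (a + a) + (x + y) = (a + x) + (a + y)}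

/-- The nucleus `N(Q)` of a loop. -/
def nucleus (Q : Type u) [Loop Q] : Set Q :=
  {a | ∀ x y, ((a + x) + y = a + (x + y)) ∧ ((x + a) + y = x + (a + y)) ∧
    ((x + y) + a = x + (y + a))}

/-- The Moufang identity. -/
def IsMoufang (Q : Type u) [Loop Q] : Prop :=
  ∀ x y z : Q, x + (y + (x + z)) = ((x + y) + x) + z

/-- The set `M(Q)`. -/
def Mset (Q : Type u) [Loop Q] : Set Q :=
  {a | ∀ x y, (x + a) + (y + x) = (x + y) + (a + x)}

namespace MoufangAux

variable {Q : Type u} [Loop Q]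

lemma lcancel {a x y : Q} (h : a + x = a + y) : x = y := (Loop.addLeft_bijective a).1 h
lemma rcancel {a x y : Q} (h : x + a = y + a) : x = y := (Loop.addRight_bijective a).1 h

noncomputable def inv (a : Q) : Q := ((Loop.addRight_bijective a).2 0).choose

lemma inv_add (a : Q) : inv a + a = 0 := ((Loop.addRight_bijective a).2 0).choose_spec

variable (hM : IsMoufang Q)
include hM

lemma flex (x y : Q) : x + (y + x) = (x + y) + x := by
  have h := hM x y 0
  rwa [Loop.add_zero, Loop.add_zero] at h

lemma lalt (x z : Q) : x + (x + z) = (x + x) + z := by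
  have h := hM x 0 z
  rwa [Loop.zero_add, Loop.add_zero] at h

lemma add_inv (a : Q) : a + inv a = 0 := by
  apply rcancel (a := a)
  rw [← flex hM a (inv a), inv_add, Loop.add_zero, Loop.zero_add]

lemma lip (x y : Q) : inv x + (x + y) = y := by
  apply lcancel (a := x)
  have h := hM x (inv x) y
  rw [add_inv hM, Loop.zero_add] at h
  exact h

lemma inv_inv (x : Q) : inv (inv x) = x := by
  apply lcancel (a := inv x)
  rw [add_inv hM, inv_add]

lemma lip' (x y : Q) : x + (inv x + y) = y := by
  have h := lip hM (inv x) y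
  rwa [inv_inv hM] at h

-- (2): (u + x) + (inv x + w) = x + ((inv x + u) + w)
lemma eq2 (x u w : Q) : (u + x) + (inv x + w) = x + ((inv x + u) + w) := by
  have h1 := hM x (inv x + u) (inv x + w)
  rw [lip' hM, lip' hM] at h1
  exact h1.symm

-- (A): x + ((inv x + u) + (x + v)) = (u + x) + v
lemma eqA (x u v : Q) : x + ((inv x + u) + (x + v)) = (u + x) + v := by
  have h := eq2 hM x u (x + v)
  rw [lip hM] at h
  exact h.symm

lemma rip (x u : Q) : (u + x) + inv x = u := by
  have h := eqA hM x u (inv x)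
  rw [add_inv hM, Loop.add_zero, lip' hM] at h
  exact h.symm

lemma rip' (x u : Q) : (u + inv x) + x = u := by
  have h := rip hM (inv x) u
  rwa [inv_inv hM] at h

lemma aaip (x y : Q) : inv (x + y) = inv y + inv x := by
  apply rcancel (a := x + y)
  rw [inv_add]
  have h := eq2 hM (inv x) (inv y) y
  rw [inv_inv hM] at h
  rw [h, rip' hM, inv_add]

lemma rmouf (x y z : Q) : ((z + x) + y) + x = z + ((x + y) + x) := by
  have h := hM (inv x) (inv y) (inv z)
  have h2 := congrArg inv h
  simp only [aaip hM, inv_inv hM] at h2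
  rw [h2, flex hM]

-- (B): (x + u) + (inv x + v) = x + ((u + inv x) + v)
lemma eqB (x u v : Q) : (x + u) + (inv x + v) = x + ((u + inv x) + v) := by
  have h := eqA hM (inv x) u v
  rw [inv_inv hM] at h
  apply lcancel (a := inv x)
  rw [lip hM, h]

lemma middle (x y z : Q) : (x + y) + (z + x) = x + ((y + z) + x) := by
  have hv : inv x + ((x + z) + x) = z + x := by
    apply lcancel (a := x)
    rw [lip' hM, flex hM]
  rw [← hv, eqB hM]
  have h := rmouf hM x z (y + inv x)
  rw [← h, rip' hM]

end MoufangAux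

open MoufangAux in
theorem moufang_commutant_eq (Q : Type u) [Loop Q] (hM : IsMoufang Q) :
    commutant Q = moufangCenter Q ∧ commutant Q = Mset Q := by
  constructor
  · ext a
    simp only [commutant, moufangCenter, Set.mem_setOf_eq]
    constructor
    · intro h x y
      rw [h y, middle hM, ← h (x + y), lalt hM]
    · intro h x
      have h1 := h x 0
      rw [Loop.add_zero, Loop.add_zero] at h1
      have h2 := h 0 x
      rw [Loop.zero_add, Loop.add_zero] at h2
      apply lcancel (a := a)
      rw [flex hM, ← h1, h2]
  · ext a
    simp only [commutant, Mset, Set.mem_setOf_eq]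
    constructor
    · intro h x y
      rw [middle hM, middle hM, h y]
    · intro h x
      have h1 := h 0 x
      rwa [Loop.zero_add, Loop.zero_add, Loop.add_zero, Loop.add_zero] at h1
end

section
/- In a Moufang loop, a permutation f of Q is a left pseudoautomorphism with left companion c (i.e., c+f(x+y) = (c+f(x))+f(y) for all x,y) if and only if f is a right pseudoautomorphism with right companion -c (i.e., f(x+y)+(-c) = f(x)+(f(y)+(-c)) for all x,y). -/
universe u

section MoufangLemmas

variable {Q : Type u} [Loop Q]

/-- Left inverse property: `x' + (x + z) = z` when `x + x' = 0`. -/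
lemma lip1 (hM : IsMoufang Q) {x x' : Q} (h : x + x' = 0) (z : Q) :
    x' + (x + z) = z := by
  have h1 := hM x x' z
  rw [h, Loop.zero_add] at h1
  exact (Loop.addLeft_bijective x).1 h1

/-- `x + (x' + w) = w` when `x + x' = 0`. -/
lemma lip2 (hM : IsMoufang Q) {x x' : Q} (h : x + x' = 0) (w : Q) :
    x + (x' + w) = w := by
  obtain ⟨z, hz⟩ := (Loop.addLeft_bijective x).2 w
  have hz' : x + z = w := hz
  rw [← hz', lip1 hM h]

lemma inv_comm (hM : IsMoufang Q) {x x' : Q} (h : x + x' = 0) : x' + x = 0 := by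
  have h1 := lip1 hM h 0
  rwa [Loop.add_zero] at h1

/-- Right inverse property: `(v + x) + x' = v` when `x + x' = 0`. -/
lemma rip (hM : IsMoufang Q) {x x' : Q} (h : x + x' = 0) (v : Q) :
    (v + x) + x' = v := by
  have h1 := hM x (x' + v) x'
  rw [h, Loop.add_zero] at h1
  simp only [lip2 hM h] at h1
  exact h1.symm

/-- A key rearrangement of the Moufang identity. -/
lemma star (hM : IsMoufang Q) {x x' : Q} (h : x + x' = 0) (v z : Q) :
    (v + x) + z = x + ((x' + v) + (x + z)) := by
  have h1 := hM x (x' + v) z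
  rw [lip2 hM h] at h1
  exact h1.symm

/-- Flexibility: `x + (y + x) = (x + y) + x`. -/
lemma flex (hM : IsMoufang Q) (x y : Q) : x + (y + x) = (x + y) + x := by
  have h1 := hM x y 0
  simp only [Loop.add_zero] at h1
  exact h1

noncomputable def neg (Q : Type u) [Loop Q] (x : Q) : Q :=
  Classical.choose ((Loop.addLeft_bijective x).2 0)

lemma loop_add_neg (x : Q) : x + neg Q x = 0 :=
  Classical.choose_spec ((Loop.addLeft_bijective x).2 0)

lemma loop_neg_add (hM : IsMoufang Q) (x : Q) : neg Q x + x = 0 :=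
  inv_comm hM (loop_add_neg x)

/-- Anti-automorphic inverse property. -/
lemma loop_neg_rev (hM : IsMoufang Q) (x y : Q) :
    neg Q (x + y) = neg Q y + neg Q x := by
  have h1 : neg Q (x + y) + (x + y) = 0 := loop_neg_add hM _
  have h2 : (neg Q y + neg Q x) + (x + y) = 0 := by
    have hs := star hM (loop_neg_add hM x) (neg Q y) (x + y)
    rw [lip1 hM (loop_add_neg x), rip hM (loop_neg_add hM y), loop_neg_add hM x] at hs
    exact hs
  exact (Loop.addRight_bijective (x + y)).1 (h1.trans h2.symm)

lemma loop_neg_neg (hM : IsMoufang Q) (x : Q) : neg Q (neg Q x) = x := by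
  have h1 : neg Q x + neg Q (neg Q x) = 0 := loop_add_neg _
  have h2 : neg Q x + x = 0 := loop_neg_add hM x
  exact (Loop.addLeft_bijective (neg Q x)).1 (h1.trans h2.symm)

lemma loop_neg_inj (hM : IsMoufang Q) {u v : Q} (h : neg Q u = neg Q v) : u = v := by
  rw [← loop_neg_neg hM u, h, loop_neg_neg hM v]

/-- The right Moufang identity. -/
lemma m2 (hM : IsMoufang Q) (x y z : Q) :
    ((z + x) + y) + x = z + (x + (y + x)) := by
  apply loop_neg_inj hM
  simp only [loop_neg_rev hM]
  exact hM (neg Q x) (neg Q y) (neg Q z)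

/-- A rearrangement of the right Moufang identity. -/
lemma rstar (hM : IsMoufang Q) {x x' : Q} (h : x + x' = 0) (z v : Q) :
    (z + x) + (v + x') = (z + (x + v)) + x' := by
  have h' := inv_comm hM h
  apply (Loop.addRight_bijective x).1
  show ((z + x) + (v + x')) + x = ((z + (x + v)) + x') + x
  rw [rip hM h' (z + (x + v))]
  have h1 := m2 hM x (v + x') z
  rw [rip hM h' v] at h1
  exact h1

/-- The middle Moufang identity. -/
lemma m3 (hM : IsMoufang Q) {x x' : Q} (h : x + x' = 0) (Y Z : Q) :
    (x + Y) + (Z + x) = (x + (Y + Z)) + x := by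
  have h' := inv_comm hM h
  have h1 := rstar hM h' ((x + Y) + x) Z
  rw [rip hM h (x + Y)] at h1
  have h2 := hM x Y (x' + Z)
  rw [lip2 hM h Z] at h2
  rw [← h2] at h1
  exact h1

end MoufangLemmas

theorem left_pseudo_iff_right_pseudo (Q : Type u) [Loop Q] (hM : IsMoufang Q)
    (f : Equiv.Perm Q) (c c' : Q) (hc : c + c' = 0) (hc' : c' + c = 0) :
    (∀ x y : Q, c + f (x + y) = (c + f x) + f y) ↔
      (∀ x y : Q, f (x + y) + c' = f x + (f y + c')) := by
  have S : ∀ a b : Q, c' + ((c + a) + b) = (a + (b + c')) + c := by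
    intro a b
    apply (Loop.addLeft_bijective c).1
    show c + (c' + ((c + a) + b)) = c + ((a + (b + c')) + c)
    rw [lip2 hM hc, flex hM, ← m3 hM hc, rip hM hc']
  constructor
  · intro H x y
    have h1 : f (x + y) = c' + ((c + f x) + f y) := by
      rw [← H x y, lip1 hM hc]
    rw [h1, S]
    exact rip hM hc _
  · intro H x y
    have h1 : f (x + y) = (f x + (f y + c')) + c := by
      rw [← H x y, rip hM hc']
    rw [h1, ← S]
    exact lip2 hM hc _
end

section
/- Let (Q,+) be a Moufang loop and f an automorphism of Q. If -x+f(x) ∈ C(Q) for all x, then -x+f(x) = f(x)-x for all x, and also -x+f⁻¹(x) ∈ C(Q) for all x. -/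
universe u

theorem aut_commutant_symm (Q : Type u) [Loop Q] (hM : IsMoufang Q)
    (neg : Q → Q) (hneg : ∀ x : Q, x + neg x = 0) (hneg' : ∀ x : Q, neg x + x = 0)
    (f : Q ≃ Q) (hf : ∀ x y : Q, f (x + y) = f x + f y)
    (h : ∀ x : Q, neg x + f x ∈ commutant Q) :
    (∀ x : Q, neg x + f x = f x + neg x) ∧
      (∀ x : Q, neg x + f.symm x ∈ commutant Q) := by

  have lc : ∀ a x y : Q, a + x = a + y → x = y :=
    fun a x y hxy => (Loop.addLeft_bijective a).injective hxy
  have lsurj : ∀ a b : Q, ∃ y, a + y = b :=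
    fun a b => (Loop.addLeft_bijective a).surjective b
  have lip1 : ∀ x z : Q, neg x + (x + z) = z := by
    intro x z
    apply lc x
    have := hM x (neg x) z
    rwa [hneg x, Loop.zero_add] at this
  have lip2 : ∀ x z : Q, x + (neg x + z) = z := by
    intro x z
    apply lc (neg x)
    have := hM (neg x) x z
    rwa [hneg' x, Loop.zero_add] at this
  have rip1 : ∀ s x : Q, (s + x) + neg x = s := by
    intro s x
    obtain ⟨y, hy⟩ := lsurj x s
    have := hM x y (neg x)
    rw [hneg x, Loop.add_zero, hy] at this
    exact this.symm
  have negneg : ∀ x : Q, neg (neg x) = x := by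
    intro x
    apply lc (neg x)
    rw [hneg (neg x), hneg' x]
  have rip2 : ∀ s x : Q, (s + neg x) + x = s := by
    intro s x
    have := rip1 s (neg x)
    rwa [negneg] at this
  have negC : ∀ c : Q, c ∈ commutant Q → neg c ∈ commutant Q := by
    intro c hc y
    apply lc c
    have h1 : c + (neg c + y) = y := lip2 c y
    have h2 : c + (y + neg c) = y := by
      rw [hc (y + neg c)]
      exact rip2 y c
    rw [h1, h2]
  constructor
  · intro x
    have hc := h x
    have h1 : (neg x + f x) + x = f x := (hc x).trans (lip2 x (f x))
    have := rip1 (neg x + f x) x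
    rw [h1] at this
    exact this.symm
  · intro x
    have hfa : f (f.symm x) = x := f.apply_symm_apply x
    have hc : neg (f.symm x) + x ∈ commutant Q := by
      have := h (f.symm x); rwa [hfa] at this
    have h1 : f.symm x + (neg (f.symm x) + x) = x := lip2 (f.symm x) x
    have h2 : x + neg (neg (f.symm x) + x) = f.symm x := by
      have := rip1 (f.symm x) (neg (f.symm x) + x)
      rwa [h1] at this
    have key := lip1 x (neg (neg (f.symm x) + x))
    rw [h2] at key
    rw [key]
    exact negC _ hc
end

section
/- If (Q,+) is an NK-loop, then the map N(Q) × K(Q) → Q given by (n,k) ↦ n+k is a surjective loop homomorphism from the direct product of the loops N(Q) and K(Q) onto Q. -/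
universe u

theorem NK_epimorphism (Q : Type u) [Loop Q]
    (hNK : ∀ a : Q, ∃ n ∈ nucleus Q, ∃ k ∈ moufangCenter Q, a = n + k) :
    (∀ n₁ ∈ nucleus Q, ∀ k₁ ∈ moufangCenter Q, ∀ n₂ ∈ nucleus Q, ∀ k₂ ∈ moufangCenter Q,
        (n₁ + k₁) + (n₂ + k₂) = (n₁ + n₂) + (k₁ + k₂)) ∧
      Function.Surjective
        (fun p : nucleus Q × moufangCenter Q => (p.1 : Q) + (p.2 : Q)) := by
  have hcomm : ∀ k ∈ moufangCenter Q, ∀ z : Q, k + z = z + k := by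
    intro k hk z
    obtain ⟨x, hx⟩ := (Loop.addLeft_bijective k).2 z
    have h1 : (k + k) + (x + 0) = (k + x) + (k + 0) := hk x 0
    have h2 : (k + k) + (0 + x) = (k + 0) + (k + x) := hk 0 x
    simp only [Loop.add_zero, Loop.zero_add] at h1 h2
    simp only at hx
    rw [← hx, ← h1, h2]
  constructor
  · intro n₁ hn₁ k₁ hk₁ n₂ hn₂ k₂ hk₂
    calc (n₁ + k₁) + (n₂ + k₂) = n₁ + (k₁ + (n₂ + k₂)) := (hn₁ k₁ (n₂ + k₂)).1
    _ = n₁ + ((k₁ + n₂) + k₂) := by rw [(hn₂ k₁ k₂).2.1]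
    _ = n₁ + ((n₂ + k₁) + k₂) := by rw [hcomm k₁ hk₁ n₂]
    _ = n₁ + (n₂ + (k₁ + k₂)) := by rw [(hn₂ k₁ k₂).1]
    _ = (n₁ + n₂) + (k₁ + k₂) := ((hn₁ n₂ (k₁ + k₂)).1).symm
  · intro a
    obtain ⟨n, hn, k, hk, ha⟩ := hNK a
    exact ⟨(⟨n, hn⟩, ⟨k, hk⟩), ha.symm⟩
end

section
/- Every NK-loop is a Moufang A-loop. -/
universe u

/-- The multiplication group of a loop, as a subgroup of the permutation group. -/
def mlt (Q : Type u) [Loop Q] : Subgroup (Equiv.Perm Q) :=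
  Subgroup.closure
    {e : Equiv.Perm Q | (∃ a : Q, ∀ x, e x = a + x) ∨ (∃ a : Q, ∀ x, e x = x + a)}

/-- An A-loop: every inner mapping (element of the multiplication group fixing 0)
is an automorphism. -/
def IsALoop (Q : Type u) [Loop Q] : Prop :=
  ∀ φ ∈ mlt Q, φ (0 : Q) = 0 → ∀ x y : Q, φ (x + y) = φ x + φ y


/-!
In an NK-loop the commutant coincides with the Moufang center `K`, and `K` is closed under
addition and under inverses. For `k ∈ K` left translations satisfy
`L (k + x) * L k = L k * L k * L x`. Expanding `L (b + (a + a))` around `b`, and `L (a + b')`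
with `b + b' = 0` around both `a` and `b'`, gives `L (a + a + b) = L a * L b * L a` for
`a, b ∈ K`, which is the Moufang law on `K`. Writing elements as `n + k` with `n` nuclear
transfers it to `Q`.

The inner maps `(L (a + b))⁻¹ * L a * L b` with `a, b ∈ K` are automorphisms, so every element of
the multiplication group has the form `L n * R m * L c * J` with `n, m` nuclear, `c ∈ K` and `J`
an automorphism. If such a map fixes `0`, then `c` is nuclear and the map is conjugation by the
nuclear element `n + c` followed by `J`.
-/

def IsNKLoop (Q : Type u) [Loop Q] : Prop :=
  ∀ a : Q, ∃ n ∈ nucleus Q, ∃ k ∈ moufangCenter Q, a = n + k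

namespace Loop

variable {Q : Type u} [Loop Q]

theorem add_left_cancel {a x y : Q} (h : a + x = a + y) : x = y :=
  (addLeft_bijective a).1 h

theorem add_right_cancel {a x y : Q} (h : x + a = y + a) : x = y :=
  (addRight_bijective a).1 h

theorem exists_add_eq (a b : Q) : ∃ x, a + x = b :=
  (addLeft_bijective a).2 b

noncomputable def leftAdd (a : Q) : Equiv.Perm Q :=
  Equiv.ofBijective _ (addLeft_bijective a)

noncomputable def rightAdd (a : Q) : Equiv.Perm Q :=
  Equiv.ofBijective _ (addRight_bijective a)

@[simp] theorem leftAdd_apply (a x : Q) : leftAdd a x = a + x := rfl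

@[simp] theorem rightAdd_apply (a x : Q) : rightAdd a x = x + a := rfl

theorem leftAdd_zero : leftAdd (0 : Q) = 1 := Equiv.ext zero_add

theorem rightAdd_zero : rightAdd (0 : Q) = 1 := Equiv.ext add_zero

section Nucleus

variable {n m : Q}

theorem nucleus_assoc_left (hn : n ∈ nucleus Q) (x y : Q) : n + x + y = n + (x + y) :=
  (hn x y).1

theorem nucleus_assoc_mid (hn : n ∈ nucleus Q) (x y : Q) : x + n + y = x + (n + y) :=
  (hn x y).2.1

theorem nucleus_assoc_right (hn : n ∈ nucleus Q) (x y : Q) : x + y + n = x + (y + n) :=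
  (hn x y).2.2

theorem zero_mem_nucleus : (0 : Q) ∈ nucleus Q := fun x y => by
  simp only [zero_add, add_zero, and_self]

theorem add_mem_nucleus (hn : n ∈ nucleus Q) (hm : m ∈ nucleus Q) : n + m ∈ nucleus Q := by
  intro x y
  refine ⟨?_, ?_, ?_⟩
  · rw [nucleus_assoc_left hn, nucleus_assoc_left hn, nucleus_assoc_left hm,
      nucleus_assoc_left hn]
  · rw [← nucleus_assoc_mid hn, nucleus_assoc_mid hm, nucleus_assoc_mid hn,
      nucleus_assoc_left hn]
  · rw [← nucleus_assoc_mid hn, nucleus_assoc_right hn, nucleus_assoc_right hm,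
      nucleus_assoc_mid hn]

theorem add_eq_zero_comm_of_mem_nucleus (hn : n ∈ nucleus Q) (h : n + m = 0) : m + n = 0 :=
  add_right_cancel (a := m) <| by rw [nucleus_assoc_mid hn, h, add_zero, zero_add]

theorem mem_nucleus_of_add_eq_zero (hn : n ∈ nucleus Q) (h : n + m = 0) : m ∈ nucleus Q := by
  have h' := add_eq_zero_comm_of_mem_nucleus hn h
  intro x y
  refine ⟨add_left_cancel (a := n) ?_, ?_, ?_⟩
  · rw [← nucleus_assoc_left hn, ← nucleus_assoc_left hn, h, zero_add, ← nucleus_assoc_left hn,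
      h, zero_add]
  · calc x + m + y = x + m + ((n + m) + y) := by rw [h, zero_add]
      _ = (x + m + n) + (m + y) := by rw [nucleus_assoc_left hn, nucleus_assoc_mid hn]
      _ = x + (m + y) := by rw [nucleus_assoc_right hn, h', add_zero]
  · calc x + y + m = (x + (y + m + n)) + m := by rw [nucleus_assoc_right hn, h', add_zero]
      _ = x + (y + m) := by
        rw [← nucleus_assoc_right hn, nucleus_assoc_mid hn, h, add_zero]

theorem leftAdd_mul_leftAdd (hn : n ∈ nucleus Q) (x : Q) :
    leftAdd n * leftAdd x = leftAdd (n + x) :=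
  Equiv.ext fun y => (nucleus_assoc_left hn x y).symm

theorem rightAdd_mul_rightAdd (hn : n ∈ nucleus Q) (x : Q) :
    rightAdd n * rightAdd x = rightAdd (x + n) :=
  Equiv.ext fun y => nucleus_assoc_right hn y x

theorem commute_leftAdd_rightAdd_of_mem_nucleus_left (hn : n ∈ nucleus Q) (x : Q) :
    Commute (leftAdd n) (rightAdd x) :=
  Equiv.ext fun y => (nucleus_assoc_left hn y x).symm

theorem commute_leftAdd_rightAdd_of_mem_nucleus_right (hn : n ∈ nucleus Q) (x : Q) :
    Commute (leftAdd x) (rightAdd n) :=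
  Equiv.ext fun y => (nucleus_assoc_right hn x y).symm

theorem inv_leftAdd_of_mem_nucleus (hn : n ∈ nucleus Q) (h : n + m = 0) :
    (leftAdd n)⁻¹ = leftAdd m :=
  inv_eq_of_mul_eq_one_right <| by rw [leftAdd_mul_leftAdd hn, h, leftAdd_zero]

theorem inv_rightAdd_of_mem_nucleus (hn : n ∈ nucleus Q) (h : n + m = 0) :
    (rightAdd n)⁻¹ = rightAdd m :=
  inv_eq_of_mul_eq_one_right <| by
    rw [rightAdd_mul_rightAdd hn, add_eq_zero_comm_of_mem_nucleus hn h, rightAdd_zero]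

end Nucleus

section MoufangCenter

variable {k : Q}

theorem add_add_of_mem_moufangCenter (hk : k ∈ moufangCenter Q) (x : Q) :
    k + (k + x) = k + k + x := by
  simpa only [zero_add, add_zero] using (hk 0 x).symm

theorem mem_commutant_of_mem_moufangCenter (hk : k ∈ moufangCenter Q) : k ∈ commutant Q := by
  intro y
  obtain ⟨x, rfl⟩ := exists_add_eq k y
  have h := hk x 0
  rw [add_zero, add_zero] at h
  rw [← h, add_add_of_mem_moufangCenter hk]

theorem zero_mem_moufangCenter : (0 : Q) ∈ moufangCenter Q := fun x y => by
  simp only [zero_add]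

theorem leftAdd_add_self (hk : k ∈ moufangCenter Q) :
    leftAdd (k + k) = leftAdd k * leftAdd k :=
  Equiv.ext fun x => (add_add_of_mem_moufangCenter hk x).symm

theorem leftAdd_add_mul_leftAdd (hk : k ∈ moufangCenter Q) (x : Q) :
    leftAdd (k + x) * leftAdd k = leftAdd k * leftAdd k * leftAdd x :=
  Equiv.ext fun y => by
    change k + x + (k + y) = k + (k + (x + y))
    rw [add_add_of_mem_moufangCenter hk, hk x y]

end MoufangCenter

section Commutant

variable {c n m t k : Q}

theorem left_comm_of_mem_commutant (hc : c ∈ commutant Q) (hn : n ∈ nucleus Q) (x : Q) :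
    c + (n + x) = n + (c + x) := by
  rw [← nucleus_assoc_mid hn, hc n, nucleus_assoc_left hn]

theorem commute_leftAdd_of_mem_commutant (hc : c ∈ commutant Q) (hn : n ∈ nucleus Q) :
    Commute (leftAdd c) (leftAdd n) :=
  Equiv.ext fun x => left_comm_of_mem_commutant hc hn x

theorem add_add_add_comm_of_mem_commutant (hn : n ∈ nucleus Q) (hm : m ∈ nucleus Q)
    (hc : c ∈ commutant Q) (x : Q) : n + c + (m + x) = n + m + (c + x) := by
  rw [nucleus_assoc_left hn, left_comm_of_mem_commutant hc hm, nucleus_assoc_left hn]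

theorem mem_moufangCenter_of_mem_nucleus_of_mem_commutant (hn : n ∈ nucleus Q)
    (hc : n ∈ commutant Q) : n ∈ moufangCenter Q := fun x y => by
  rw [nucleus_assoc_left hn, hc (x + y), nucleus_assoc_right hn, ← hc y, nucleus_assoc_left hn]

theorem add_mem_moufangCenter_of_mem_nucleus_of_mem_commutant (hn : n ∈ nucleus Q)
    (hc : n ∈ commutant Q) (hk : k ∈ moufangCenter Q) : n + k ∈ moufangCenter Q := by
  have hsq : n + k + (n + k) = n + n + (k + k) :=
    add_add_add_comm_of_mem_commutant hn hn (mem_commutant_of_mem_moufangCenter hk) k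
  intro x y
  rw [hsq, nucleus_assoc_left (add_mem_nucleus hn hn), hk x y,
    mem_moufangCenter_of_mem_nucleus_of_mem_commutant hn hc, nucleus_assoc_left hn k x,
    nucleus_assoc_left hn k y]

theorem mem_commutant_of_add_mem_commutant (hn : n ∈ nucleus Q) (ht : t ∈ commutant Q)
    (h : n + t ∈ commutant Q) : n ∈ commutant Q := fun x =>
  add_right_cancel (a := t) <| by
    rw [nucleus_assoc_left hn, ← ht x, ← nucleus_assoc_left hn, h, nucleus_assoc_mid hn]

theorem rightAdd_add_of_mem_commutant (hn : n ∈ nucleus Q) (hc : c ∈ commutant Q) :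
    rightAdd (n + c) = leftAdd c * rightAdd n :=
  Equiv.ext fun x => by
    change x + (n + c) = c + (x + n)
    rw [← nucleus_assoc_mid hn, hc]

end Commutant

end Loop

namespace IsNKLoop

open Loop

variable {Q : Type u} [Loop Q] {a b c k w : Q}

theorem add_mem_commutant (hQ : IsNKLoop Q) (ha : a ∈ commutant Q) (hb : b ∈ commutant Q) :
    a + b ∈ commutant Q := by
  intro x
  obtain ⟨n, hn, k, hk, rfl⟩ := hQ x
  have hab : a + b + n = n + (a + b) := by
    rw [nucleus_assoc_right hn, hb n, ← nucleus_assoc_mid hn, ha n, nucleus_assoc_left hn]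
  rw [← nucleus_assoc_mid hn (a + b) k, hab, nucleus_assoc_left hn,
    ← mem_commutant_of_mem_moufangCenter hk (a + b), nucleus_assoc_left hn k]

theorem mem_moufangCenter_of_mem_commutant (hQ : IsNKLoop Q) (hc : c ∈ commutant Q) :
    c ∈ moufangCenter Q := by
  obtain ⟨n, hn, k, hk, rfl⟩ := hQ c
  exact add_mem_moufangCenter_of_mem_nucleus_of_mem_commutant hn
    (mem_commutant_of_add_mem_commutant hn (mem_commutant_of_mem_moufangCenter hk) hc) hk

theorem add_mem_moufangCenter (hQ : IsNKLoop Q) (ha : a ∈ moufangCenter Q)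
    (hb : b ∈ moufangCenter Q) : a + b ∈ moufangCenter Q :=
  hQ.mem_moufangCenter_of_mem_commutant <| hQ.add_mem_commutant
    (mem_commutant_of_mem_moufangCenter ha) (mem_commutant_of_mem_moufangCenter hb)

theorem mem_moufangCenter_of_add_eq_zero (hQ : IsNKLoop Q) (hk : k ∈ moufangCenter Q)
    (h : k + w = 0) : w ∈ moufangCenter Q := by
  obtain ⟨n, hn, j, hj, rfl⟩ := hQ w
  have hs : k + j ∈ commutant Q :=
    mem_commutant_of_mem_moufangCenter (hQ.add_mem_moufangCenter hk hj)
  have hns : n + (k + j) ∈ commutant Q := by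
    rw [← left_comm_of_mem_commutant (mem_commutant_of_mem_moufangCenter hk) hn, h]
    exact mem_commutant_of_mem_moufangCenter zero_mem_moufangCenter
  exact add_mem_moufangCenter_of_mem_nucleus_of_mem_commutant hn
    (mem_commutant_of_add_mem_commutant hn hs hns) hj

theorem leftAdd_add_self_add (hQ : IsNKLoop Q) (ha : a ∈ moufangCenter Q)
    (hb : b ∈ moufangCenter Q) :
    leftAdd (a + a + b) = leftAdd a * leftAdd b * leftAdd a := by
  obtain ⟨b', hbb'⟩ := exists_add_eq b 0
  have hb' := hQ.mem_moufangCenter_of_add_eq_zero hb hbb'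
  have hinv : leftAdd b' = (leftAdd b)⁻¹ := by
    have h := leftAdd_add_mul_leftAdd hb b'
    rw [hbb', leftAdd_zero, one_mul] at h
    refine eq_inv_of_mul_eq_one_right ?_
    calc leftAdd b * leftAdd b' = (leftAdd b)⁻¹ * (leftAdd b * leftAdd b * leftAdd b') := by
          group
      _ = 1 := by rw [← h]; group
  -- both sides are `leftAdd (a + b')`, expanded once around `a` and once around `b'`
  have hrel : leftAdd a * leftAdd a * (leftAdd b)⁻¹ * (leftAdd a)⁻¹ =
      (leftAdd b)⁻¹ * (leftAdd b)⁻¹ * leftAdd a * leftAdd b := by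
    have ha' := leftAdd_add_mul_leftAdd ha b'
    have hb'' := leftAdd_add_mul_leftAdd hb' a
    rw [mem_commutant_of_mem_moufangCenter hb' a] at hb''
    rw [hinv] at ha' hb''
    rw [← ha', ← hb'']
    group
  have h := leftAdd_add_mul_leftAdd hb (a + a)
  rw [mem_commutant_of_mem_moufangCenter hb, leftAdd_add_self ha] at h
  calc leftAdd (a + a + b) = leftAdd (a + a + b) * leftAdd b * (leftAdd b)⁻¹ := by group
    _ = leftAdd b * leftAdd b * (leftAdd a * leftAdd a * (leftAdd b)⁻¹ * (leftAdd a)⁻¹) *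
          leftAdd a := by rw [h]; group
    _ = leftAdd a * leftAdd b * leftAdd a := by rw [hrel]; group

theorem moufang_of_mem_moufangCenter (hQ : IsNKLoop Q) (ha : a ∈ moufangCenter Q)
    (hb : b ∈ moufangCenter Q) (z : Q) : a + (b + (a + z)) = a + b + a + z := by
  rw [← mem_commutant_of_mem_moufangCenter ha (a + b), add_add_of_mem_moufangCenter ha b]
  exact (congrArg (· z) (hQ.leftAdd_add_self_add ha hb)).symm

theorem isMoufang (hQ : IsNKLoop Q) : IsMoufang Q := by
  intro x y z
  obtain ⟨n₁, hn₁, k₁, hk₁, rfl⟩ := hQ x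
  obtain ⟨n₂, hn₂, k₂, hk₂, rfl⟩ := hQ y
  have hc₁ := mem_commutant_of_mem_moufangCenter hk₁
  have hc₂ := mem_commutant_of_mem_moufangCenter hk₂
  have hn₁₂ := add_mem_nucleus hn₁ hn₂
  calc n₁ + k₁ + (n₂ + k₂ + (n₁ + k₁ + z))
      = n₁ + (n₂ + n₁) + (k₁ + (k₂ + (k₁ + z))) := by
        rw [nucleus_assoc_left hn₁ k₁ z, add_add_add_comm_of_mem_commutant hn₂ hn₁ hc₂,
          add_add_add_comm_of_mem_commutant hn₁ (add_mem_nucleus hn₂ hn₁) hc₁]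
    _ = n₁ + n₂ + n₁ + (k₁ + k₂ + k₁ + z) := by
        rw [nucleus_assoc_left hn₁ n₂ n₁, hQ.moufang_of_mem_moufangCenter hk₁ hk₂]
    _ = n₁ + k₁ + (n₂ + k₂) + (n₁ + k₁) + z := by
        rw [add_add_add_comm_of_mem_commutant hn₁ hn₂ hc₁,
          add_add_add_comm_of_mem_commutant hn₁₂ hn₁ (hQ.add_mem_commutant hc₁ hc₂),
          nucleus_assoc_left (add_mem_nucleus hn₁₂ hn₁)]

end IsNKLoop

namespace Loop

variable {Q : Type u} [Loop Q]

def IsAdditive (f : Equiv.Perm Q) : Prop :=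
  ∀ x y, f (x + y) = f x + f y

namespace IsAdditive

variable {f g : Equiv.Perm Q}

theorem one : IsAdditive (1 : Equiv.Perm Q) := fun _ _ => rfl

theorem mul (hf : IsAdditive f) (hg : IsAdditive g) : IsAdditive (f * g) := fun x y => by
  simp only [Equiv.Perm.mul_apply, hg x y, hf (g x) (g y)]

theorem inv (hf : IsAdditive f) : IsAdditive f⁻¹ := fun x y => f.injective <| by
  rw [hf]
  simp only [Equiv.Perm.coe_inv, Equiv.apply_symm_apply]

theorem map_zero (hf : IsAdditive f) : f 0 = 0 :=
  add_left_cancel (a := f 0) <| by rw [← hf, add_zero, add_zero]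

theorem map_mem_nucleus (hf : IsAdditive f) {n : Q} (hn : n ∈ nucleus Q) :
    f n ∈ nucleus Q := by
  intro x y
  obtain ⟨x, rfl⟩ := f.surjective x
  obtain ⟨y, rfl⟩ := f.surjective y
  simp only [← hf _ _, nucleus_assoc_left hn, nucleus_assoc_mid hn, nucleus_assoc_right hn,
    and_self]

theorem map_mem_moufangCenter (hf : IsAdditive f) {k : Q} (hk : k ∈ moufangCenter Q) :
    f k ∈ moufangCenter Q := by
  intro x y
  obtain ⟨x, rfl⟩ := f.surjective x
  obtain ⟨y, rfl⟩ := f.surjective y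
  simp only [← hf _ _, hk x y]

end IsAdditive

theorem isAdditive_inv_leftAdd_mul_leftAdd {a b : Q} (ha : a ∈ moufangCenter Q)
    (hb : b ∈ moufangCenter Q) (hab : a + b ∈ moufangCenter Q) :
    IsAdditive ((leftAdd (a + b))⁻¹ * (leftAdd a * leftAdd b)) := by
  set ι := (leftAdd (a + b))⁻¹ * (leftAdd a * leftAdd b)
  have hι (t : Q) : a + b + ι t = a + (b + t) :=
    congrArg (· t) (mul_inv_cancel_left (leftAdd (a + b)) (leftAdd a * leftAdd b))
  intro x y
  refine add_left_cancel (a := a + b) (add_left_cancel (a := a + b) ?_)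
  calc a + b + (a + b + ι (x + y)) = a + a + (b + b + (x + y)) := by
        rw [hι, ← ha, add_add_of_mem_moufangCenter hb]
    _ = a + b + (a + b + (ι x + ι y)) := by
        rw [add_add_of_mem_moufangCenter hab, hab, hι, hι, ← ha, hb]

theorem isAdditive_leftAdd_mul_rightAdd {g m : Q} (hg : g ∈ nucleus Q) (hm : m ∈ nucleus Q)
    (h : g + m = 0) : IsAdditive (leftAdd g * rightAdd m) := by
  have h' := add_eq_zero_comm_of_mem_nucleus hg h
  intro x y
  change g + (x + y + m) = g + (x + m) + (g + (y + m))
  rw [nucleus_assoc_left hg, nucleus_assoc_mid hm, ← nucleus_assoc_mid hg m, h', zero_add,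
    nucleus_assoc_right hm]

def IsAffine (φ : Equiv.Perm Q) : Prop :=
  ∃ n ∈ nucleus Q, ∃ m ∈ nucleus Q, ∃ c ∈ moufangCenter Q, ∃ f : Equiv.Perm Q,
    IsAdditive f ∧ φ = leftAdd n * rightAdd m * leftAdd c * f

theorem isAffine_one : IsAffine (1 : Equiv.Perm Q) :=
  ⟨0, zero_mem_nucleus, 0, zero_mem_nucleus, 0, zero_mem_moufangCenter, 1, IsAdditive.one, by
    rw [leftAdd_zero, rightAdd_zero, one_mul, one_mul, one_mul]⟩

namespace IsAffine

variable {φ : Equiv.Perm Q}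

theorem leftAdd_mul_of_mem_nucleus {n₀ : Q} (hn₀ : n₀ ∈ nucleus Q) (hφ : IsAffine φ) :
    IsAffine (leftAdd n₀ * φ) := by
  obtain ⟨n, hn, m, hm, c, hc, f, hf, rfl⟩ := hφ
  refine ⟨n₀ + n, add_mem_nucleus hn₀ hn, m, hm, c, hc, f, hf, ?_⟩
  rw [← leftAdd_mul_leftAdd hn₀]
  group

theorem rightAdd_mul_of_mem_nucleus {m₀ : Q} (hm₀ : m₀ ∈ nucleus Q) (hφ : IsAffine φ) :
    IsAffine (rightAdd m₀ * φ) := by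
  obtain ⟨n, hn, m, hm, c, hc, f, hf, rfl⟩ := hφ
  refine ⟨n, hn, m + m₀, add_mem_nucleus hm hm₀, c, hc, f, hf, ?_⟩
  rw [← rightAdd_mul_rightAdd hm₀]
  simp only [mul_assoc]
  rw [(commute_leftAdd_rightAdd_of_mem_nucleus_left hn m₀).left_comm]

theorem mul_left_of_isAdditive {f₀ : Equiv.Perm Q} (hf₀ : IsAdditive f₀) (hφ : IsAffine φ) :
    IsAffine (f₀ * φ) := by
  obtain ⟨n, hn, m, hm, c, hc, f, hf, rfl⟩ := hφ
  refine ⟨f₀ n, hf₀.map_mem_nucleus hn, f₀ m, hf₀.map_mem_nucleus hm, f₀ c,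
    hf₀.map_mem_moufangCenter hc, f₀ * f, hf₀.mul hf, ?_⟩
  ext x
  simp only [Equiv.Perm.mul_apply, leftAdd_apply, rightAdd_apply, hf₀ _ _]

theorem leftAdd_mul_of_mem_moufangCenter (hQ : IsNKLoop Q) {c₀ : Q}
    (hc₀ : c₀ ∈ moufangCenter Q) (hφ : IsAffine φ) : IsAffine (leftAdd c₀ * φ) := by
  obtain ⟨n, hn, m, hm, c, hc, f, hf, rfl⟩ := hφ
  have hsum := hQ.add_mem_moufangCenter hc₀ hc
  refine ⟨n, hn, m, hm, c₀ + c, hsum,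
    (leftAdd (c₀ + c))⁻¹ * (leftAdd c₀ * leftAdd c) * f,
    (isAdditive_inv_leftAdd_mul_leftAdd hc₀ hc hsum).mul hf, ?_⟩
  simp only [mul_assoc, mul_inv_cancel_left]
  rw [(commute_leftAdd_of_mem_commutant (mem_commutant_of_mem_moufangCenter hc₀) hn).left_comm,
    (commute_leftAdd_rightAdd_of_mem_nucleus_right hm c₀).left_comm]

theorem isAdditive_of_map_zero (hφ : IsAffine φ) (h0 : φ 0 = 0) : IsAdditive φ := by
  obtain ⟨n, hn, m, hm, c, hc, f, hf, rfl⟩ := hφ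
  change n + (c + f 0 + m) = 0 at h0
  rw [hf.map_zero, add_zero] at h0
  have hcn : c ∈ nucleus Q := mem_nucleus_of_add_eq_zero (add_mem_nucleus hn hm) <| by
    rw [nucleus_assoc_left hn, ← mem_commutant_of_mem_moufangCenter hc m, h0]
  have hφ : leftAdd n * rightAdd m * leftAdd c * f = leftAdd (n + c) * rightAdd m * f := by
    rw [← leftAdd_mul_leftAdd hn c]
    simp only [mul_assoc]
    rw [(commute_leftAdd_rightAdd_of_mem_nucleus_right hm c).left_comm]
  rw [hφ]
  exact (isAdditive_leftAdd_mul_rightAdd (add_mem_nucleus hn hcn) hm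
    (by rw [nucleus_assoc_left hn, h0])).mul hf

end IsAffine

end Loop

namespace IsNKLoop

open Loop

variable {Q : Type u} [Loop Q] {φ : Equiv.Perm Q}

theorem isAffine_leftAdd_mul (hQ : IsNKLoop Q) (a : Q) (hφ : IsAffine φ) :
    IsAffine (leftAdd a * φ) := by
  obtain ⟨n, hn, k, hk, rfl⟩ := hQ a
  rw [← leftAdd_mul_leftAdd hn, mul_assoc]
  exact (hφ.leftAdd_mul_of_mem_moufangCenter hQ hk).leftAdd_mul_of_mem_nucleus hn

theorem isAffine_rightAdd_mul (hQ : IsNKLoop Q) (a : Q) (hφ : IsAffine φ) :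
    IsAffine (rightAdd a * φ) := by
  obtain ⟨n, hn, k, hk, rfl⟩ := hQ a
  rw [rightAdd_add_of_mem_commutant hn (mem_commutant_of_mem_moufangCenter hk), mul_assoc]
  exact (hφ.rightAdd_mul_of_mem_nucleus hn).leftAdd_mul_of_mem_moufangCenter hQ hk

theorem isAffine_inv_leftAdd_mul_of_mem_moufangCenter (hQ : IsNKLoop Q) {k : Q}
    (hk : k ∈ moufangCenter Q) (hφ : IsAffine φ) : IsAffine ((leftAdd k)⁻¹ * φ) := by
  obtain ⟨k', hkk'⟩ := exists_add_eq k 0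
  have hk' := hQ.mem_moufangCenter_of_add_eq_zero hk hkk'
  have hf : IsAdditive (leftAdd k * leftAdd k') := by
    have h := isAdditive_inv_leftAdd_mul_leftAdd hk hk' (hkk' ▸ zero_mem_moufangCenter)
    rwa [hkk', leftAdd_zero, inv_one, one_mul] at h
  have hinv : (leftAdd k)⁻¹ * φ = leftAdd k' * ((leftAdd k * leftAdd k')⁻¹ * φ) := by group
  rw [hinv]
  exact (hφ.mul_left_of_isAdditive hf.inv).leftAdd_mul_of_mem_moufangCenter hQ hk'

theorem isAffine_inv_leftAdd_mul (hQ : IsNKLoop Q) (a : Q) (hφ : IsAffine φ) :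
    IsAffine ((leftAdd a)⁻¹ * φ) := by
  obtain ⟨n, hn, k, hk, rfl⟩ := hQ a
  obtain ⟨n', hnn'⟩ := exists_add_eq n 0
  rw [← leftAdd_mul_leftAdd hn, mul_inv_rev, mul_assoc, inv_leftAdd_of_mem_nucleus hn hnn']
  exact hQ.isAffine_inv_leftAdd_mul_of_mem_moufangCenter hk
    (hφ.leftAdd_mul_of_mem_nucleus (mem_nucleus_of_add_eq_zero hn hnn'))

theorem isAffine_inv_rightAdd_mul (hQ : IsNKLoop Q) (a : Q) (hφ : IsAffine φ) :
    IsAffine ((rightAdd a)⁻¹ * φ) := by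
  obtain ⟨n, hn, k, hk, rfl⟩ := hQ a
  obtain ⟨n', hnn'⟩ := exists_add_eq n 0
  rw [rightAdd_add_of_mem_commutant hn (mem_commutant_of_mem_moufangCenter hk), mul_inv_rev,
    mul_assoc, inv_rightAdd_of_mem_nucleus hn hnn']
  exact (hQ.isAffine_inv_leftAdd_mul_of_mem_moufangCenter hk hφ).rightAdd_mul_of_mem_nucleus
    (mem_nucleus_of_add_eq_zero hn hnn')

theorem isAffine_of_mem_mlt (hQ : IsNKLoop Q) (hφ : φ ∈ mlt Q) : IsAffine φ := by
  induction hφ using Subgroup.closure_induction_left with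
  | one => exact isAffine_one
  | mul_left e he ψ _ hψ =>
    rcases he with ⟨a, ha⟩ | ⟨a, ha⟩
    · obtain rfl : e = leftAdd a := Equiv.ext ha
      exact hQ.isAffine_leftAdd_mul a hψ
    · obtain rfl : e = rightAdd a := Equiv.ext ha
      exact hQ.isAffine_rightAdd_mul a hψ
  | inv_mul_cancel e he ψ _ hψ =>
    rcases he with ⟨a, ha⟩ | ⟨a, ha⟩
    · obtain rfl : e = leftAdd a := Equiv.ext ha
      exact hQ.isAffine_inv_leftAdd_mul a hψ
    · obtain rfl : e = rightAdd a := Equiv.ext ha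
      exact hQ.isAffine_inv_rightAdd_mul a hψ

theorem isALoop (hQ : IsNKLoop Q) : IsALoop Q := fun _ hφ h0 =>
  (hQ.isAffine_of_mem_mlt hφ).isAdditive_of_map_zero h0

end IsNKLoop

theorem NK_loop_is_Moufang_A_loop (Q : Type u) [Loop Q]
    (hNK : ∀ a : Q, ∃ n ∈ nucleus Q, ∃ k ∈ moufangCenter Q, a = n + k) :
    IsMoufang Q ∧ IsALoop Q :=
  ⟨IsNKLoop.isMoufang hNK, IsNKLoop.isALoop hNK⟩
end

section
/- In a commutative Moufang loop, every left pseudoautomorphism is an automorphism and its companion lies in the center. -/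
universe u

theorem comm_moufang_pseudoautomorphism (Q : Type u) [Loop Q] (hM : IsMoufang Q)
    (hcomm : ∀ x y : Q, x + y = y + x)
    (f : Equiv.Perm Q) (c : Q)
    (hpseudo : ∀ x y : Q, c + f (x + y) = (c + f x) + f y) :
    (∀ x y : Q, f (x + y) = f x + f y) ∧ c ∈ nucleus Q ∧ c ∈ commutant Q := by
  -- cancellation laws
  have cl : ∀ (a : Q) {b d : Q}, a + b = a + d → b = d := by
    intro a b d h
    exact (Loop.addLeft_bijective a).injective h
  have cr : ∀ (a : Q) {b d : Q}, b + a = d + a → b = d := by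
    intro a b d h
    exact (Loop.addRight_bijective a).injective h
  -- left alternativity
  have LA : ∀ x z : Q, x + (x + z) = (x + x) + z := by
    intro x z
    have h := hM x 0 z
    rwa [Loop.zero_add, Loop.add_zero] at h
  -- Moufang variant
  have M' : ∀ x y z : Q, x + (y + (x + z)) = ((x + x) + y) + z := by
    intro x y z
    rw [hM x y z, hcomm (x + y) x, LA]
  -- the key CML squaring identity
  have S : ∀ x u v : Q, (x + u) + (x + v) = (x + x) + (u + v) := by
    intro x u v
    obtain ⟨z, hz⟩ := (Loop.addLeft_bijective x).surjective u
    have hz' : x + z = u := hz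
    have B : z + ((x + x) + v) = x + ((x + z) + v) := by
      rw [hcomm z ((x + x) + v), ← M' x v z, hcomm v (x + z)]
    calc (x + u) + (x + v) = (x + (x + z)) + (x + v) := by rw [hz']
      _ = ((x + x) + z) + (x + v) := by rw [LA]
      _ = x + (z + (x + (x + v))) := (M' x z (x + v)).symm
      _ = x + (z + ((x + x) + v)) := by rw [LA x v]
      _ = x + (x + ((x + z) + v)) := by rw [B]
      _ = (x + x) + ((x + z) + v) := LA _ _
      _ = (x + x) + (u + v) := by rw [hz']
  -- key identity from the pseudoautomorphism
  have Z2 : ∀ a b d : Q, ((c + a) + a) + (c + (b + d)) = ((c + a) + b) + (c + (a + d)) := by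
    intro a b d
    set x := f.symm a with hx
    set y := f.symm b with hy
    set z := f.symm (c + d) with hzz
    have fx : f x = a := f.apply_symm_apply a
    have fy : f y = b := f.apply_symm_apply b
    have fz : f z = c + d := f.apply_symm_apply (c + d)
    have h1 : c + f (x + x) = (c + a) + a := by rw [hpseudo, fx]
    have h3 : c + f (x + y) = (c + a) + b := by rw [hpseudo, fx, fy]
    have hyz : f (y + z) = c + (b + d) := by
      apply cl c
      rw [hpseudo, fy, fz, S c b d, ← LA]
    have hxz : f (x + z) = c + (a + d) := by
      apply cl c
      rw [hpseudo, fx, fz, S c a d, ← LA]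
    have e1 := hpseudo (x + x) (y + z)
    have e2 := hpseudo (x + y) (x + z)
    rw [← S x y z] at e1
    have key := e1.symm.trans e2
    rw [h1, h3, hyz, hxz] at key
    exact key
  -- c is in the left nucleus
  have NL : ∀ a b : Q, (c + a) + b = c + (a + b) := by
    intro a b
    apply cr (c + a)
    have z1 := Z2 a b 0
    have z2 := Z2 a 0 b
    rw [Loop.add_zero, Loop.add_zero] at z1
    rw [Loop.zero_add, Loop.add_zero] at z2
    calc ((c + a) + b) + (c + a) = ((c + a) + a) + (c + b) := z1.symm
      _ = (c + a) + (c + (a + b)) := z2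
      _ = (c + (a + b)) + (c + a) := hcomm _ _
  -- middle nucleus condition
  have NM : ∀ x y : Q, (x + c) + y = x + (c + y) := by
    intro x y
    calc (x + c) + y = (c + x) + y := by rw [hcomm x c]
      _ = c + (x + y) := NL x y
      _ = c + (y + x) := by rw [hcomm x y]
      _ = (c + y) + x := (NL y x).symm
      _ = x + (c + y) := hcomm _ _
  -- right nucleus condition
  have NR : ∀ x y : Q, (x + y) + c = x + (y + c) := by
    intro x y
    calc (x + y) + c = c + (x + y) := hcomm _ _
      _ = (c + x) + y := (NL x y).symm
      _ = (x + c) + y := by rw [hcomm c x]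
      _ = x + (c + y) := NM x y
      _ = x + (y + c) := by rw [hcomm c y]
  refine ⟨?_, ?_, ?_⟩
  · intro x y
    apply cl c
    rw [hpseudo, NL]
  · intro x y
    exact ⟨NL x y, NM x y, NR x y⟩
  · intro x
    exact hcomm c x
end

section
/- Let (Q,+) be a Moufang loop and f an automorphism of Q such that -x+f(x) ∈ K(Q) and -x+f(2x) ∈ N(Q) for all x ∈ Q. Then (Q,+) is an NK-loop and x+(y+z) = (f(x)+y)+((f(-x)+x)+z) for all x,y,z ∈ Q. -/
universe u

theorem moufang_aut_NK (Q : Type u) [Loop Q] (hM : IsMoufang Q)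
    (neg : Q → Q) (hneg : ∀ x : Q, x + neg x = 0) (hneg' : ∀ x : Q, neg x + x = 0)
    (f : Q ≃ Q) (hf : ∀ x y : Q, f (x + y) = f x + f y)
    (hK : ∀ x : Q, neg x + f x ∈ moufangCenter Q)
    (hN : ∀ x : Q, neg x + f (x + x) ∈ nucleus Q) :
    (∀ a : Q, ∃ n ∈ nucleus Q, ∃ k ∈ moufangCenter Q, a = n + k) ∧
      (∀ x y z : Q, x + (y + z) = (f x + y) + ((f (neg x) + x) + z)) := by
  have cl : ∀ a x y : Q, a + x = a + y → x = y :=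
    fun a x y h => (Loop.addLeft_bijective a).1 h
  have cr : ∀ a x y : Q, x + a = y + a → x = y :=
    fun a x y h => (Loop.addRight_bijective a).1 h
  have za : ∀ a : Q, 0 + a = a := Loop.zero_add
  have az : ∀ a : Q, a + 0 = a := Loop.add_zero
  -- left inverse property
  have lip : ∀ x y : Q, neg x + (x + y) = y := by
    intro x y
    apply cl x
    have h := hM x (neg x) y
    rwa [hneg, za] at h
  have nn : ∀ x : Q, neg (neg x) = x := by
    intro x
    apply cl (neg x)
    rw [hneg, hneg']
  have lip' : ∀ x y : Q, x + (neg x + y) = y := by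
    intro x y
    have h := lip (neg x) y
    rwa [nn] at h
  -- right inverse property
  have rip : ∀ x y : Q, (y + x) + neg x = y := by
    intro x y
    have h := hM x (neg x + y) (neg x)
    rw [hneg, az, lip'] at h
    exact h.symm
  have rip' : ∀ x y : Q, (y + neg x) + x = y := by
    intro x y
    have h := rip (neg x) y
    rwa [nn] at h
  -- flexibility and left alternativity
  have flex : ∀ x y : Q, x + (y + x) = (x + y) + x := by
    intro x y
    have h := hM x y 0
    rwa [az, az] at h
  have la : ∀ a b : Q, a + (a + b) = (a + a) + b := by
    intro a b
    have h := hM a 0 b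
    rwa [za, az] at h
  -- autotopism-style consequences, leading to the antiautomorphic inverse property
  have atp1 : ∀ x u v : Q, ((x + u) + x) + (neg x + v) = x + (u + v) := by
    intro x u v
    have h := hM x u (neg x + v)
    rw [lip'] at h
    exact h.symm
  have e2 : ∀ x w v : Q, (x + (w + neg v)) + x = (x + w) + neg (neg x + v) := by
    intro x w v
    have h := atp1 x (w + neg v) v
    rw [rip'] at h
    have h2 := rip (neg x + v) ((x + (w + neg v)) + x)
    rw [h] at h2
    exact h2.symm
  have negkey : ∀ x t : Q, neg (neg x + neg t) = t + x := by
    intro x t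
    have h := e2 x (neg x) (neg t)
    rw [nn, lip', hneg, za] at h
    exact h.symm
  have aip : ∀ a b : Q, neg (a + b) = neg b + neg a := by
    intro a b
    have h := negkey (neg a) (neg b)
    rwa [nn, nn] at h
  -- right Moufang identity and right alternativity
  have m2 : ∀ a b c : Q, ((a + b) + c) + b = a + (b + (c + b)) := by
    intro a b c
    have h := congrArg neg (hM (neg b) (neg c) (neg a))
    simp only [aip, nn] at h
    exact h
  have ra : ∀ a b : Q, (a + b) + b = a + (b + b) := by
    intro a b
    have h := m2 a b 0
    rwa [az, za] at h
  -- Moufang center facts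
  have kc : ∀ k : Q, k ∈ moufangCenter Q → ∀ s : Q, k + s = s + k := by
    intro k hk s
    have hk' : ∀ x y : Q, (k + k) + (x + y) = (k + x) + (k + y) := hk
    have h0 : ∀ t : Q, (k + k) + t = (k + t) + k := by
      intro t
      have h := hk' t 0
      rwa [az, az] at h
    have h2 : k + (k + (neg k + s)) = (k + (neg k + s)) + k := by
      rw [la, h0]
    rwa [lip'] at h2
  have nkc : ∀ k : Q, k ∈ moufangCenter Q → ∀ s : Q, neg k + s = s + neg k := by
    intro k hk s
    apply cr k
    rw [rip', ← kc k hk (neg k + s)]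
    exact lip' k s
  have nk_mem : ∀ k : Q, k ∈ moufangCenter Q → neg k ∈ moufangCenter Q := by
    intro k hk
    have hk' : ∀ x y : Q, (k + k) + (x + y) = (k + x) + (k + y) := hk
    have key : ∀ a b : Q, (neg k + neg k) + ((k + a) + (k + b)) = a + b := by
      intro a b
      rw [← hk' a b, ← aip]
      exact lip (k + k) (a + b)
    show ∀ x y : Q, (neg k + neg k) + (x + y) = (neg k + x) + (neg k + y)
    intro x y
    have h := key (neg k + x) (neg k + y)
    rwa [lip', lip'] at h
  have twok_mem : ∀ k : Q, k ∈ moufangCenter Q → (k + k) ∈ moufangCenter Q := by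
    intro k hk
    have hk' : ∀ x y : Q, (k + k) + (x + y) = (k + x) + (k + y) := hk
    show ∀ x y : Q, ((k + k) + (k + k)) + (x + y) = ((k + k) + x) + ((k + k) + y)
    intro x y
    calc ((k + k) + (k + k)) + (x + y) = (k + k) + ((k + k) + (x + y)) := (la _ _).symm
      _ = (k + k) + ((k + x) + (k + y)) := by rw [hk' x y]
      _ = (k + (k + x)) + (k + (k + y)) := hk' _ _
      _ = ((k + k) + x) + ((k + k) + y) := by rw [la k x, la k y]
  have twok_comm : ∀ k : Q, (∀ s : Q, k + s = s + k) → ∀ s : Q, (k + k) + s = s + (k + k) := by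
    intro k hc s
    calc (k + k) + s = k + (k + s) := (la _ _).symm
      _ = k + (s + k) := by rw [hc s]
      _ = (k + s) + k := flex k s
      _ = (s + k) + k := by rw [hc s]
      _ = s + (k + k) := ra s k
  -- basic facts about f
  have f0 : f (0 : Q) = 0 := by
    apply cl (f 0)
    rw [← hf, za, az]
  have fneg : ∀ x : Q, f (neg x) = neg (f x) := by
    intro x
    apply cl (f x)
    rw [← hf, hneg x, f0, hneg (f x)]
  -- the core computation
  have core : ∀ k g : Q, k ∈ moufangCenter Q → (k + g) ∈ nucleus Q → ∀ x : Q, g = x + k →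
      (x = (k + g) + (neg k + neg k) ∧ ∀ y z : Q, x + (y + z) = (g + y) + (neg k + z)) := by
    intro k g hk hn x hg
    have hn' : ∀ u v : Q, (((k + g) + u) + v = (k + g) + (u + v)) ∧
        ((u + (k + g)) + v = u + ((k + g) + v)) ∧ ((u + v) + (k + g) = u + (v + (k + g))) := hn
    have step1 : neg k + g = x := by
      rw [hg, ← kc k hk x]
      exact lip k x
    have step2 : x = (neg k + neg k) + (k + g) := by
      rw [← la, lip, step1]
    have hnk' : ∀ a b : Q, (neg k + neg k) + (a + b) = (neg k + a) + (neg k + b) :=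
      nk_mem k hk
    refine ⟨?_, ?_⟩
    · rw [step2]
      exact twok_comm (neg k) (nkc k hk) (k + g)
    · intro y z
      have hg2 : g = neg k + (k + g) := (lip k g).symm
      calc x + (y + z) = ((neg k + neg k) + (k + g)) + (y + z) := by rw [← step2]
        _ = (neg k + neg k) + ((k + g) + (y + z)) := (hn' (neg k + neg k) (y + z)).2.1
        _ = (neg k + neg k) + (((k + g) + y) + z) := by rw [← (hn' y z).1]
        _ = (neg k + ((k + g) + y)) + (neg k + z) := hnk' _ _
        _ = ((neg k + (k + g)) + y) + (neg k + z) := by rw [← (hn' (neg k) y).2.1]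
        _ = (g + y) + (neg k + z) := by rw [← hg2]
  -- assemble
  have nfact : ∀ a : Q, ((neg a + f a) + f a) ∈ nucleus Q := by
    intro a
    have h : (neg a + f a) + f a = neg a + (f a + f a) := ra (neg a) (f a)
    rw [h, ← hf]
    exact hN a
  constructor
  · intro a
    have hk := hK a
    obtain ⟨h1, _⟩ := core (neg a + f a) (f a) hk (nfact a) a (lip' a (f a)).symm
    exact ⟨(neg a + f a) + f a, nfact a,
      neg (neg a + f a) + neg (neg a + f a), twok_mem _ (nk_mem _ hk), h1⟩
  · intro x y z
    have hk := hK x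
    obtain ⟨_, h2⟩ := core (neg x + f x) (f x) hk (nfact x) x (lip' x (f x)).symm
    have hx : f (neg x) + x = neg (neg x + f x) := by
      rw [fneg x, aip, nn]
    rw [hx]
    exact h2 y z
end

section
/- Let (Q,+) be an NK-loop, e ∈ Z(Q,+), and f,g commuting automorphisms of (Q,+) such that x+f(x), x+g(x) ∈ N(Q) and -x+f(x), -x+g(x) ∈ K(Q) for all x. Define x·y = f(x)+e+g(y). Then (Q,·) is an F-quasigroup, with α(x) = -g⁻¹(e)-g⁻¹f(x)+g⁻¹(x) and β(x) = f⁻¹(x)-f⁻¹g(x)-f⁻¹(e). -/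
set_option linter.unusedSectionVars false

universe u

namespace NKAux

variable {Q : Type u} [Loop Q]

theorem zadd (a : Q) : 0 + a = a := Loop.zero_add a
theorem addz (a : Q) : a + 0 = a := Loop.add_zero a

theorem lcan {a x y : Q} (h : a + x = a + y) : x = y :=
  (Loop.addLeft_bijective a).injective h

theorem rcan {a x y : Q} (h : x + a = y + a) : x = y :=
  (Loop.addRight_bijective a).injective h

theorem lsurj (a b : Q) : ∃ x, a + x = b := (Loop.addLeft_bijective a).surjective b

theorem n1 {n : Q} (hn : n ∈ nucleus Q) (x y : Q) : (n + x) + y = n + (x + y) :=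
  (hn x y).1
theorem n2 {n : Q} (hn : n ∈ nucleus Q) (x y : Q) : (x + n) + y = x + (n + y) :=
  (hn x y).2.1
theorem n3 {n : Q} (hn : n ∈ nucleus Q) (x y : Q) : (x + y) + n = x + (y + n) :=
  (hn x y).2.2

theorem nN_add {n m : Q} (hn : n ∈ nucleus Q) (hm : m ∈ nucleus Q) :
    n + m ∈ nucleus Q := by
  intro x y
  refine ⟨?_, ?_, ?_⟩
  · calc ((n + m) + x) + y = (n + (m + x)) + y := by rw [n1 hn m x]
      _ = n + ((m + x) + y) := n1 hn _ _
      _ = n + (m + (x + y)) := by rw [n1 hm x y]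
      _ = (n + m) + (x + y) := (n1 hn _ _).symm
  · calc (x + (n + m)) + y = ((x + n) + m) + y := by rw [n2 hn x m]
      _ = (x + n) + (m + y) := n2 hm _ _
      _ = x + (n + (m + y)) := n2 hn _ _
      _ = x + ((n + m) + y) := by rw [n1 hn m y]
  · calc (x + y) + (n + m) = ((x + y) + n) + m := by rw [n3 hm (x + y) n]
      _ = (x + (y + n)) + m := by rw [n3 hn x y]
      _ = x + ((y + n) + m) := n3 hm _ _
      _ = x + (y + (n + m)) := by rw [n3 hm y n]

section Neg
variable {neg : Q → Q} (hneg : ∀ x : Q, x + neg x = 0) (hneg' : ∀ x : Q, neg x + x = 0)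
include hneg hneg'

theorem neg_neg (x : Q) : neg (neg x) = x :=
  lcan (a := neg x) (by rw [hneg (neg x), hneg' x])

theorem eq_neg_of_add {a b : Q} (h : a + b = 0) : b = neg a :=
  lcan (a := a) (by rw [h, hneg a])

theorem eq_neg_of_add' {a b : Q} (h : a + b = 0) : a = neg b :=
  rcan (a := b) (by rw [h, hneg' b])

theorem neg_zero' : neg (0 : Q) = 0 :=
  (eq_neg_of_add hneg hneg' (zadd 0)).symm

theorem nN_neg {n : Q} (hn : n ∈ nucleus Q) : neg n ∈ nucleus Q := by
  have h1 : ∀ x y : Q, (neg n + x) + y = neg n + (x + y) := by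
    intro x y
    apply lcan (a := n)
    calc n + ((neg n + x) + y) = (n + (neg n + x)) + y := (n1 hn _ _).symm
      _ = ((n + neg n) + x) + y := by rw [← n1 hn (neg n) x]
      _ = x + y := by rw [hneg n, zadd]
      _ = (n + neg n) + (x + y) := by rw [hneg n, zadd]
      _ = n + (neg n + (x + y)) := n1 hn _ _
  have h2 : ∀ x y : Q, (x + neg n) + y = x + (neg n + y) := by
    intro x y
    have hx : (x + neg n) + n = x := by rw [n3 hn x (neg n), hneg' n, addz]
    have hy : n + (neg n + y) = y := by rw [← n1 hn (neg n) y, hneg n, zadd]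
    calc (x + neg n) + y = (x + neg n) + (n + (neg n + y)) := by rw [hy]
      _ = ((x + neg n) + n) + (neg n + y) := (n2 hn _ _).symm
      _ = x + (neg n + y) := by rw [hx]
  have h3 : ∀ x y : Q, (x + y) + neg n = x + (y + neg n) := by
    intro x y
    apply rcan (a := n)
    rw [n3 hn (x + y) (neg n), hneg' n, addz, n3 hn x (y + neg n), n3 hn y (neg n),
      hneg' n, addz]
  exact fun x y => ⟨h1 x y, h2 x y, h3 x y⟩

end Neg

section KKit
variable {k : Q} (hk : k ∈ moufangCenter Q)
include hk

theorem KF2 (x y : Q) : (k + k) + (x + y) = (k + x) + (k + y) := hk x y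

theorem F3a (y : Q) : (k + k) + y = k + (k + y) := by
  have h := hk 0 y
  rwa [zadd, addz] at h

theorem F3b (x : Q) : (k + k) + x = (k + x) + k := by
  have h := hk x 0
  rwa [addz, addz] at h

theorem k_comm (z : Q) : k + z = z + k := by
  obtain ⟨x, rfl⟩ := lsurj k z
  rw [← F3a hk, F3b hk]

section KNeg
variable {neg : Q → Q} (hneg : ∀ x : Q, x + neg x = 0) (hneg' : ∀ x : Q, neg x + x = 0)
include hneg hneg'

theorem LIPk (y : Q) : k + (neg k + y) = y := by
  apply lcan (a := k)
  have h := hk (neg k) y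
  rw [hneg k, zadd] at h
  rw [← h, F3a hk]

theorem LIPk' (y : Q) : neg k + (k + y) = y := by
  apply lcan (a := k)
  rw [LIPk hk hneg hneg' (k + y)]

theorem RIPk (x : Q) : (x + neg k) + k = x := by
  have h := hk x (neg k)
  rw [hneg k, addz] at h
  rw [← k_comm hk]
  apply lcan (a := k)
  rw [← F3a hk, h]

theorem RIPk' (y : Q) : (y + k) + neg k = y := by
  apply rcan (a := k)
  rw [RIPk hk hneg hneg' (y + k)]

theorem negk_comm (z : Q) : neg k + z = z + neg k := by
  apply lcan (a := k)
  rw [LIPk hk hneg hneg' z, k_comm hk (z + neg k), RIPk hk hneg hneg' z]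

theorem inv1 (z : Q) : (k + k) + ((neg k + neg k) + z) = z := by
  have h := hk (neg k + neg k) z
  have h2 : k + (neg k + neg k) = neg k := LIPk hk hneg hneg' (neg k)
  rw [h2] at h
  rw [h, LIPk' hk hneg hneg']

theorem inv2 (z : Q) : (neg k + neg k) + ((k + k) + z) = z := by
  apply lcan (a := k + k)
  rw [inv1 hk hneg hneg' ((k+k)+z)]

theorem neg_two : neg (k + k) = neg k + neg k := by
  refine (eq_neg_of_add hneg hneg' ?_).symm
  have h := inv1 hk hneg hneg' 0
  rwa [addz] at h

theorem negk_K : neg k ∈ moufangCenter Q := by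
  intro x y
  obtain ⟨x', rfl⟩ := lsurj k x
  obtain ⟨y', rfl⟩ := lsurj k y
  rw [LIPk' hk hneg hneg', LIPk' hk hneg hneg', ← KF2 hk x' y',
    inv2 hk hneg hneg' (x' + y')]

theorem twok_comm (x : Q) : (k + k) + x = x + (k + k) := by
  obtain ⟨x', rfl⟩ := lsurj k x
  rw [← hk x' k, k_comm hk x']

theorem P3 (x : Q) : (k + (k + k)) + x = k + (k + (k + x)) := by
  have h := hk (k + k) (neg k + x)
  rw [LIPk hk hneg hneg' x] at h
  rw [← h, F3a hk, F3a hk, LIPk hk hneg hneg' x]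

theorem op4 (w : Q) : ((k + k) + (k + k)) + w = (k + k) + ((k + k) + w) := by
  have e4 : (k + k) + (k + k) = k + (k + (k + k)) := F3a hk (k + k)
  have h := hk (k + (k + k)) (neg k + w)
  rw [LIPk hk hneg hneg' w] at h
  rw [e4, ← h, P3 hk hneg hneg', LIPk hk hneg hneg' w, F3a hk (k + (k + w)),
    ← F3a hk w, ← F3a hk ((k + k) + w)]

theorem twok_K : k + k ∈ moufangCenter Q := by
  intro x y
  rw [F3a hk x, F3a hk y, ← KF2 hk (k + x) (k + y), ← KF2 hk x y,
    op4 hk hneg hneg' (x + y)]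

end KNeg
end KKit

section Gen
variable {neg : Q → Q} (hneg : ∀ x : Q, x + neg x = 0) (hneg' : ∀ x : Q, neg x + x = 0)
include hneg hneg'

theorem neg_nk {n k : Q} (hn : n ∈ nucleus Q) (hk : k ∈ moufangCenter Q) :
    neg (n + k) = neg k + neg n := by
  refine (eq_neg_of_add hneg hneg' ?_).symm
  rw [n1 hn k (neg k + neg n), LIPk hk hneg hneg' (neg n), hneg n]

section NKhyp
variable (hNK : ∀ a : Q, ∃ n ∈ nucleus Q, ∃ k ∈ moufangCenter Q, a = n + k)
include hNK

theorem gLIP1 (a s : Q) : a + (neg a + s) = s := by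
  obtain ⟨n, hn, k, hk, rfl⟩ := hNK a
  have hnn := nN_neg hneg hneg' hn
  rw [neg_nk hneg hneg' hn hk, n2 hnn (neg k) s, n1 hn k (neg k + (neg n + s)),
    LIPk hk hneg hneg' (neg n + s), ← n1 hn (neg n) s, hneg n, zadd]

theorem gLIP2 (a s : Q) : neg a + (a + s) = s := by
  obtain ⟨n, hn, k, hk, rfl⟩ := hNK a
  have hnn := nN_neg hneg hneg' hn
  rw [neg_nk hneg hneg' hn hk, n1 hn k s, n2 hnn (neg k) (n + (k + s)),
    ← n1 hnn n (k + s), hneg' n, zadd, LIPk' hk hneg hneg' s]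

theorem gRIP1 (s a : Q) : (s + a) + neg a = s := by
  obtain ⟨n, hn, k, hk, rfl⟩ := hNK a
  have hnn := nN_neg hneg hneg' hn
  rw [neg_nk hneg hneg' hn hk, ← n2 hn s k, ← n3 hnn ((s + n) + k) (neg k),
    RIPk' hk hneg hneg' (s + n), n3 hnn s n, hneg n, addz]

theorem gRIP2 (s a : Q) : (s + neg a) + a = s := by
  obtain ⟨n, hn, k, hk, rfl⟩ := hNK a
  have hnn := nN_neg hneg hneg' hn
  rw [neg_nk hneg hneg' hn hk, ← n3 hnn s (neg k), n2 hnn (s + neg k) (n + k),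
    ← n1 hnn n k, hneg' n, zadd, RIPk hk hneg hneg' s]

theorem neg_add_N {n : Q} (hn : n ∈ nucleus Q) (w : Q) :
    neg (n + w) = neg w + neg n := by
  refine (eq_neg_of_add hneg hneg' ?_).symm
  rw [n1 hn w (neg w + neg n), gLIP1 hneg hneg' hNK w (neg n), hneg n]

theorem neg_add_K {k : Q} (hk : k ∈ moufangCenter Q) (X : Q) :
    neg (X + k) = neg k + neg X := by
  refine (eq_neg_of_add hneg hneg' ?_).symm
  have h1 : neg k + neg X = k + (neg k + (neg k + neg X)) :=
    (LIPk hk hneg hneg' _).symm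
  rw [h1, ← k_comm hk X, ← KF2 hk X (neg k + (neg k + neg X)),
    ← F3a (negk_K hk hneg hneg') (neg X), twok_comm (negk_K hk hneg hneg') hneg hneg' (neg X),
    gLIP1 hneg hneg' hNK X (neg k + neg k), ← neg_two hk hneg hneg', hneg (k + k)]

theorem neg_add_rev (x y : Q) : neg (x + y) = neg y + neg x := by
  obtain ⟨n, hn, k, hk, rfl⟩ := hNK x
  have hnn := nN_neg hneg hneg' hn
  rw [n1 hn k y, neg_add_N hneg hneg' hNK hn (k + y), k_comm hk y,
    neg_add_K hneg hneg' hNK hk y, neg_nk hneg hneg' hn hk,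
    ← n3 hnn (neg y) (neg k), negk_comm hk hneg hneg' (neg y)]

end NKhyp

theorem F2R {k : Q} (hk : k ∈ moufangCenter Q) (x y : Q) :
    (x + k) + (y + k) = (x + y) + (k + k) := by
  rw [← k_comm hk x, ← k_comm hk y, ← KF2 hk x y, twok_comm hk hneg hneg' (x + y)]

theorem sigma1 {k : Q} (hk : k ∈ moufangCenter Q) (A x : Q) :
    (A + k) + x = (k + k) + (A + (neg k + x)) := by
  have hx : (x + neg k) + k = x := RIPk hk hneg hneg' x
  calc (A + k) + x = (A + k) + ((x + neg k) + k) := by rw [hx]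
    _ = (A + (x + neg k)) + (k + k) := F2R hneg hneg' hk A (x + neg k)
    _ = (k + k) + (A + (x + neg k)) := (twok_comm hk hneg hneg' (A + (x + neg k))).symm
    _ = (k + k) + (A + (neg k + x)) := by rw [← negk_comm hk hneg hneg' x]

theorem e_sq {k l : Q} (hk : k ∈ moufangCenter Q) (hl : l ∈ moufangCenter Q) :
    (k + l) + (k + l) = (l + l) + (k + k) := by
  rw [sigma1 hneg hneg' hl k (k + l), k_comm hk l, LIPk' hl hneg hneg' k]

theorem K_closed {k l : Q} (hk : k ∈ moufangCenter Q) (hl : l ∈ moufangCenter Q) :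
    k + l ∈ moufangCenter Q := by
  intro x y
  rw [e_sq hneg hneg' hk hl, sigma1 hneg hneg' hl k x, sigma1 hneg hneg' hl k y,
    ← KF2 (twok_K hl hneg hneg') (k + (neg l + x)) (k + (neg l + y)),
    ← KF2 hk (neg l + x) (neg l + y), ← KF2 (negk_K hl hneg hneg') x y,
    twok_comm hl hneg hneg' (k + k), sigma1 hneg hneg' (twok_K hl hneg hneg') (k + k) (x + y),
    neg_two hl hneg hneg']

end Gen

section Cube
variable {neg : Q → Q} (hneg : ∀ x : Q, x + neg x = 0) (hneg' : ∀ x : Q, neg x + x = 0)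
variable {k l : Q} (hk : k ∈ moufangCenter Q) (hl : l ∈ moufangCenter Q)
include hneg hneg' hk hl

theorem negl_l2 (z : Q) : neg l + ((l + l) + z) = l + z := by
  rw [F3a hl z, LIPk' hl hneg hneg' (l + z)]

theorem m0 (x : Q) : (l + l) + (k + (neg l + x)) = (k + k) + (l + (neg k + x)) := by
  rw [← sigma1 hneg hneg' hl k x, k_comm hk l, sigma1 hneg hneg' hk l x]

theorem cc_exp (w : Q) :
    ((k + l) + (k + l)) + w = (l + l) + (k + (l + (k + (neg l + w)))) := by
  have hc : k + l ∈ moufangCenter Q := K_closed hneg hneg' hk hl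
  rw [F3a hc w, sigma1 hneg hneg' hl k w,
    sigma1 hneg hneg' hl k ((l + l) + (k + (neg l + w))),
    negl_l2 hneg hneg' hk hl (k + (neg l + w))]

theorem n0 (x : Q) :
    ((k + l) + (k + l)) + (k + (neg (k + l) + x)) = (l + l) + ((k + k) + (neg l + x)) := by
  have hc : k + l ∈ moufangCenter Q := K_closed hneg hneg' hk hl
  rw [← sigma1 hneg hneg' hc k x, ← F3a hk l, sigma1 hneg hneg' hl (k + k) x]

theorem N1 (y : Q) : l + (k + (neg l + (k + (y)))) = k + (l + (k + (neg l + (y)))) := by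
  have hc : k + l ∈ moufangCenter Q := K_closed hneg hneg' hk hl
  have hn2 : ∀ x : Q, k + (l + (k + (neg l + (k + (neg (k + l) + x))))) = (k + k) + (neg l + x) := by
    intro x
    apply lcan (a := l + l)
    rw [← cc_exp hneg hneg' hk hl (k + (neg (k + l) + x)), n0 hneg hneg' hk hl x]
  have hn3 := hn2 ((k + l) + y)
  rw [LIPk' hc hneg hneg' y, sigma1 hneg hneg' hl k y,
    negl_l2 hneg hneg' hk hl (k + (neg l + y)), F3a hk (l + (k + (neg l + y)))] at hn3
  exact lcan hn3

theorem nd (y : Q) : k + (l + (k + y)) = (l + l) + ((k + k) + (neg l + y)) := by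
  apply lcan (a := l + l)
  calc (l + l) + (k + (l + (k + y)))
      = (l + l) + (k + (l + (k + (neg l + (l + y))))) := by rw [LIPk' hl hneg hneg' y]
    _ = ((k + l) + (k + l)) + (l + y) := (cc_exp hneg hneg' hk hl (l + y)).symm
    _ = ((l + l) + (k + k)) + (l + y) := by rw [e_sq hneg hneg' hk hl]
    _ = ((k + k) + (l + l)) + (l + y) := by rw [twok_comm hl hneg hneg' (k + k)]
    _ = ((l + l) + (l + l)) + ((k + k) + (neg (l + l) + (l + y))) :=
        sigma1 hneg hneg' (twok_K hl hneg hneg') (k + k) (l + y)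
    _ = ((l + l) + (l + l)) + ((k + k) + (neg l + y)) := by
        rw [neg_two hl hneg hneg', F3a (negk_K hl hneg hneg') (l + y),
          LIPk' hl hneg hneg' y]
    _ = (l + l) + ((l + l) + ((k + k) + (neg l + y))) :=
        op4 hl hneg hneg' ((k + k) + (neg l + y))

theorem m1 (x : Q) : l + (l + (k + (neg l + (neg l + (l + (k + (neg l + (x)))))))) = k + (k + (x)) := by
  rw [LIPk' hl hneg hneg' (k + (neg l + x)), ← F3a hl (k + (neg l + (k + (neg l + x)))),
    m0 hneg hneg' hk hl (k + (neg l + x)), LIPk' hk hneg hneg' (neg l + x),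
    LIPk hl hneg hneg' x, F3a hk x]

theorem m2 (x : Q) : l + (l + (k + (neg l + (neg l + (l + (l + (k + (neg l + (neg l + (x)))))))))) = k + (l + (k + (neg l + (x)))) := by
  rw [LIPk' hl hneg hneg' (l + (k + (neg l + (neg l + x)))),
    LIPk' hl hneg hneg' (k + (neg l + (neg l + x))),
    nd hneg hneg' hk hl (neg l + x), F3a hl ((k + k) + (neg l + (neg l + x))),
    F3a hk (neg l + (neg l + x))]

theorem g2eq (x : Q) : l + (l + (k + (neg l + (neg l + (x))))) = k + (k + (l + (neg k + (neg l + (x))))) := by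
  rw [← F3a hl (k + (neg l + (neg l + x))), ← F3a hk (l + (neg k + (neg l + x)))]
  exact m0 hneg hneg' hk hl (neg l + x)

theorem ginv1 (x : Q) : l + (k + (neg l + (l + (neg k + (neg l + (x)))))) = x := by
  rw [LIPk' hl hneg hneg' (neg k + (neg l + x)), LIPk hk hneg hneg' (neg l + x),
    LIPk hl hneg hneg' x]

theorem m1s (z : Q) : l + (k + (neg l + (l + (l + (k + (neg l + (neg l + (z)))))))) = k + (k + (z)) := by
  rw [g2eq hneg hneg' hk hl z, N1 hneg hneg' hk hl (k + (l + (neg k + (neg l + (z))))),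
    N1 hneg hneg' hk hl (l + (neg k + (neg l + (z)))), ginv1 hneg hneg' hk hl z]

theorem g13 (y : Q) : l + (k + (neg l + (l + (k + (neg l + (l + (k + (neg l + (y))))))))) = l + (k + (k + (k + (neg l + y)))) := by
  rw [LIPk' hl hneg hneg' (k + (neg l + y)), LIPk' hl hneg hneg' (k + (k + (neg l + y)))]

theorem m3 (x : Q) : k + (k + (k + x)) = l + (k + (k + (k + (neg l + x)))) := by
  have h : k + (k + (k + (k + (x)))) = k + (l + (k + (neg l + (l + (k + (neg l + (l + (k + (neg l + (x)))))))))) := by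
    calc k + (k + (k + (k + (x)))) = l + (l + (k + (neg l + (neg l + (l + (k + (neg l + (k + (k + (x)))))))))) := (m1 hneg hneg' hk hl (k + (k + (x)))).symm
      _ = l + (l + (k + (neg l + (neg l + (l + (k + (neg l + (l + (l + (k + (neg l + (neg l + (l + (k + (neg l + (x)))))))))))))))) := by rw [← m1 hneg hneg' hk hl x]
      _ = l + (l + (k + (neg l + (neg l + (k + (k + (l + (k + (neg l + (x)))))))))) := by rw [m1s hneg hneg' hk hl (l + (k + (neg l + (x))))]
      _ = l + (l + (k + (neg l + (neg l + (l + (l + (k + (neg l + (neg l + (l + (k + (neg l + (l + (k + (neg l + (x)))))))))))))))) := by rw [← m1 hneg hneg' hk hl (l + (k + (neg l + (x))))]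
      _ = k + (l + (k + (neg l + (l + (k + (neg l + (l + (k + (neg l + (x)))))))))) := m2 hneg hneg' hk hl (l + (k + (neg l + (l + (k + (neg l + (x)))))))
  have h2 := lcan h
  rw [g13 hneg hneg' hk hl x] at h2
  exact h2

theorem cube_comm (y : Q) : (k + (k + k)) + (l + y) = l + ((k + (k + k)) + y) := by
  rw [P3 hk hneg hneg' (l + y), P3 hk hneg hneg' y, m3 hneg hneg' hk hl (l + y),
    LIPk' hl hneg hneg' y]

end Cube

section CubeNuc
variable {neg : Q → Q} (hneg : ∀ x : Q, x + neg x = 0) (hneg' : ∀ x : Q, neg x + x = 0)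
variable {k : Q} (hk : k ∈ moufangCenter Q)
include hneg hneg' hk

theorem tk_m {m : Q} (hm : m ∈ nucleus Q) :
    (k + (k + k)) + m = m + (k + (k + k)) := by
  rw [P3 hk hneg hneg' m, ← F3a hk m, twok_comm hk hneg hneg' m, ← n2 hm k (k + k),
    k_comm hk m, n1 hm k (k + k)]

section WithNK
variable (hNK : ∀ a : Q, ∃ n ∈ nucleus Q, ∃ k ∈ moufangCenter Q, a = n + k)
include hNK

theorem threek_comm (x : Q) : (k + (k + k)) + x = x + (k + (k + k)) := by
  obtain ⟨m, hm, lam, hlam, rfl⟩ := hNK x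
  rw [← n2 hm (k + (k + k)) lam, tk_m hneg hneg' hk hm, n1 hm (k + (k + k)) lam,
    ← k_comm hlam (k + (k + k)), ← n1 hm lam (k + (k + k))]

theorem R1K {lam : Q} (hlam : lam ∈ moufangCenter Q) (w : Q) :
    ((k + (k + k)) + lam) + w = (k + (k + k)) + (lam + w) := by
  rw [sigma1 hneg hneg' hlam (k + (k + k)) w,
    cube_comm hneg hneg' hk (negk_K hlam hneg hneg') w,
    F3a hlam (neg lam + ((k + (k + k)) + w)), LIPk hlam hneg hneg' ((k + (k + k)) + w),
    cube_comm hneg hneg' hk hlam w]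

theorem cube_nuc1 (v w : Q) :
    ((k + (k + k)) + v) + w = (k + (k + k)) + (v + w) := by
  obtain ⟨m, hm, lam, hlam, rfl⟩ := hNK v
  calc ((k + (k + k)) + (m + lam)) + w
      = (((k + (k + k)) + m) + lam) + w := by rw [← n2 hm (k + (k + k)) lam]
    _ = ((m + (k + (k + k))) + lam) + w := by rw [tk_m hneg hneg' hk hm]
    _ = (m + ((k + (k + k)) + lam)) + w := by rw [n1 hm (k + (k + k)) lam]
    _ = m + (((k + (k + k)) + lam) + w) := n1 hm ((k + (k + k)) + lam) w
    _ = m + ((k + (k + k)) + (lam + w)) := by rw [R1K hneg hneg' hk hNK hlam w]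
    _ = (m + (k + (k + k))) + (lam + w) := (n1 hm (k + (k + k)) (lam + w)).symm
    _ = ((k + (k + k)) + m) + (lam + w) := by rw [← tk_m hneg hneg' hk hm]
    _ = (k + (k + k)) + (m + (lam + w)) := n2 hm (k + (k + k)) (lam + w)
    _ = (k + (k + k)) + ((m + lam) + w) := by rw [n1 hm lam w]

end WithNK
end CubeNuc

section COne
variable {neg : Q → Q} (hneg : ∀ x : Q, x + neg x = 0) (hneg' : ∀ x : Q, neg x + x = 0)
variable (hNK : ∀ a : Q, ∃ n ∈ nucleus Q, ∃ k ∈ moufangCenter Q, a = n + k)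
include hneg hneg' hNK

theorem nega_u (u a : Q) : neg a + u = neg (neg u + a) := by
  apply eq_neg_of_add hneg hneg'
  have ha : neg a = neg (neg u + a) + neg u := by
    conv_lhs => rw [← gLIP1 hneg hneg' hNK u a]
    rw [neg_add_rev hneg hneg' hNK u (neg u + a)]
  rw [ha, gRIP2 hneg hneg' hNK (neg (neg u + a)) u, hneg (neg u + a)]

theorem C1e {n5 v6 kp : Q} (h5 : n5 ∈ nucleus Q) (h6 : v6 ∈ nucleus Q)
    (hκ : kp ∈ moufangCenter Q) (hkK : n5 + (kp + kp) ∈ moufangCenter Q) (v w : Q) :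
    ((n5 + (kp + kp)) + ((v6 + kp) + v)) + w
      = (v6 + kp) + ((n5 + (kp + kp)) + (v + w)) := by
  have h56 := nN_add h5 h6
  have hdia : n5 + v6 = v6 + n5 := by
    apply rcan (a := kp + kp)
    calc (n5 + v6) + (kp + kp) = n5 + (v6 + (kp + kp)) := n2 h6 n5 (kp + kp)
      _ = n5 + ((kp + kp) + v6) := by rw [← twok_comm hκ hneg hneg' v6]
      _ = (n5 + (kp + kp)) + v6 := (n1 h5 (kp + kp) v6).symm
      _ = v6 + (n5 + (kp + kp)) := k_comm hkK v6
      _ = (v6 + n5) + (kp + kp) := (n2 h5 v6 (kp + kp)).symm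
  calc ((n5 + (kp + kp)) + ((v6 + kp) + v)) + w
      = ((n5 + (kp + kp)) + (v6 + (kp + v))) + w := by rw [n1 h6 kp v]
    _ = (n5 + ((kp + kp) + (v6 + (kp + v)))) + w := by
        rw [n1 h5 (kp + kp) (v6 + (kp + v))]
    _ = (n5 + (((kp + kp) + v6) + (kp + v))) + w := by rw [← n2 h6 (kp + kp) (kp + v)]
    _ = (n5 + ((v6 + (kp + kp)) + (kp + v))) + w := by rw [twok_comm hκ hneg hneg' v6]
    _ = (n5 + (v6 + ((kp + kp) + (kp + v)))) + w := by rw [n1 h6 (kp + kp) (kp + v)]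
    _ = (n5 + (v6 + (kp + (kp + (kp + v))))) + w := by rw [F3a hκ (kp + v)]
    _ = (n5 + (v6 + ((kp + (kp + kp)) + v))) + w := by rw [← P3 hκ hneg hneg' v]
    _ = ((n5 + v6) + ((kp + (kp + kp)) + v)) + w := by
        rw [← n1 h5 v6 ((kp + (kp + kp)) + v)]
    _ = (n5 + v6) + (((kp + (kp + kp)) + v) + w) := n1 h56 ((kp + (kp + kp)) + v) w
    _ = (n5 + v6) + ((kp + (kp + kp)) + (v + w)) := by
        rw [cube_nuc1 hneg hneg' hκ hNK v w]
    _ = (v6 + n5) + ((kp + (kp + kp)) + (v + w)) := by rw [hdia]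
    _ = v6 + (n5 + ((kp + (kp + kp)) + (v + w))) := n1 h6 n5 _
    _ = v6 + (n5 + (kp + ((kp + kp) + (v + w)))) := by
        rw [P3 hκ hneg hneg' (v + w), ← F3a hκ (v + w)]
    _ = v6 + ((n5 + kp) + ((kp + kp) + (v + w))) := by
        rw [← n1 h5 kp ((kp + kp) + (v + w))]
    _ = v6 + ((kp + n5) + ((kp + kp) + (v + w))) := by rw [← k_comm hκ n5]
    _ = v6 + (kp + (n5 + ((kp + kp) + (v + w)))) := by
        rw [n2 h5 kp ((kp + kp) + (v + w))]
    _ = v6 + (kp + ((n5 + (kp + kp)) + (v + w))) := by rw [n1 h5 (kp + kp) (v + w)]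
    _ = (v6 + kp) + ((n5 + (kp + kp)) + (v + w)) := (n1 h6 kp _).symm

theorem C1 (u a v w : Q) (hK : neg u + a ∈ moufangCenter Q) (hN : u + a ∈ nucleus Q) :
    (a + v) + (neg (neg u + a) + w) = u + (v + w) := by
  obtain ⟨nu, hnu, ka, hka, hdec⟩ := hNK (neg u)
  have nk := negk_K hK hneg hneg'
  -- decomposition facts
  have hD1 : neg u + neg u = (nu + nu) + (ka + ka) := by
    rw [hdec]
    calc (nu + ka) + (nu + ka) = nu + (ka + (nu + ka)) := n1 hnu ka (nu + ka)
      _ = nu + ((ka + nu) + ka) := by rw [← n2 hnu ka ka]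
      _ = nu + ((nu + ka) + ka) := by rw [← k_comm hka nu]
      _ = nu + (nu + (ka + ka)) := by rw [n1 hnu ka ka]
      _ = (nu + nu) + (ka + ka) := (n1 hnu nu (ka + ka)).symm
  have hkform : neg u + a = ((nu + nu) + (u + a)) + (ka + ka) := by
    conv_lhs => rw [← gLIP2 hneg hneg' hNK u a]
    rw [← n3 hN (neg u) (neg u), hD1, n1 (nN_add hnu hnu) (ka + ka) (u + a),
      twok_comm hka hneg hneg' (u + a), ← n2 hN (nu + nu) (ka + ka)]
  have haform : a = (nu + (u + a)) + ka := by
    conv_lhs => rw [← gLIP2 hneg hneg' hNK u a]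
    rw [hdec, n1 hnu ka (u + a), k_comm hka (u + a), ← n2 hN nu ka]
  have h5 : (nu + nu) + (u + a) ∈ nucleus Q := nN_add (nN_add hnu hnu) hN
  have h6 : nu + (u + a) ∈ nucleus Q := nN_add hnu hN
  have hkK : ((nu + nu) + (u + a)) + (ka + ka) ∈ moufangCenter Q := by
    rw [← hkform]; exact hK
  have hcore := C1e hneg hneg' hNK h5 h6 hka hkK v w
  rw [← hkform, ← haform] at hcore
  calc (a + v) + (neg (neg u + a) + w)
      = (neg (neg u + a) + ((neg u + a) + (a + v))) + (neg (neg u + a) + w) := by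
        rw [LIPk' hK hneg hneg' (a + v)]
    _ = (neg (neg u + a) + neg (neg u + a)) + (((neg u + a) + (a + v)) + w) :=
        (KF2 nk ((neg u + a) + (a + v)) w).symm
    _ = (neg (neg u + a) + neg (neg u + a)) + (a + ((neg u + a) + (v + w))) := by
        rw [hcore]
    _ = (neg (neg u + a) + neg (neg u + a)) + ((u + (neg u + a)) + ((neg u + a) + (v + w))) := by
        rw [gLIP1 hneg hneg' hNK u a]
    _ = (neg (neg u + a) + neg (neg u + a)) + (((neg u + a) + u) + ((neg u + a) + (v + w))) := by
        rw [← k_comm hK u]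
    _ = (neg (neg u + a) + neg (neg u + a)) + (((neg u + a) + (neg u + a)) + (u + (v + w))) := by
        rw [← KF2 hK u (v + w)]
    _ = u + (v + w) := inv2 hK hneg hneg' (u + (v + w))

end COne

section Hom
variable (F : Q ≃ Q) (hF : ∀ x y : Q, F (x + y) = F x + F y)
include hF

theorem hom_zero : F (0 : Q) = 0 := by
  have h := hF 0 0
  rw [zadd] at h
  have h2 : F (0 : Q) + 0 = F 0 + F 0 := by rw [addz]; exact h
  exact (lcan h2).symm

theorem hom_neg {neg : Q → Q} (hneg : ∀ x : Q, x + neg x = 0)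
    (hneg' : ∀ x : Q, neg x + x = 0) (x : Q) : F (neg x) = neg (F x) := by
  apply eq_neg_of_add hneg hneg'
  rw [← hF x (neg x), hneg x, hom_zero F hF]

theorem hom_nuc {n : Q} (hn : n ∈ nucleus Q) : F n ∈ nucleus Q := by
  intro x y
  refine ⟨?_, ?_, ?_⟩
  · rw [← F.apply_symm_apply x, ← F.apply_symm_apply y, ← hF n (F.symm x),
      ← hF (n + F.symm x) (F.symm y), ← hF (F.symm x) (F.symm y),
      ← hF n (F.symm x + F.symm y), n1 hn (F.symm x) (F.symm y)]
  · rw [← F.apply_symm_apply x, ← F.apply_symm_apply y, ← hF (F.symm x) n,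
      ← hF (F.symm x + n) (F.symm y), ← hF n (F.symm y),
      ← hF (F.symm x) (n + F.symm y), n2 hn (F.symm x) (F.symm y)]
  · rw [← F.apply_symm_apply x, ← F.apply_symm_apply y, ← hF (F.symm x) (F.symm y),
      ← hF (F.symm x + F.symm y) n, ← hF (F.symm y) n,
      ← hF (F.symm x) (F.symm y + n), n3 hn (F.symm x) (F.symm y)]

theorem hom_comm {c : Q} (hc : ∀ t : Q, c + t = t + c) (t : Q) : F c + t = t + F c := by
  rw [← F.apply_symm_apply t, ← hF c (F.symm t), hc (F.symm t), hF (F.symm t) c]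

end Hom

section Misc
variable {neg : Q → Q} (hneg : ∀ x : Q, x + neg x = 0) (hneg' : ∀ x : Q, neg x + x = 0)
variable (hNK : ∀ a : Q, ∃ n ∈ nucleus Q, ∃ k ∈ moufangCenter Q, a = n + k)
include hneg hneg' hNK

theorem neg_comm_of {c : Q} (hc : ∀ t : Q, c + t = t + c) (t : Q) :
    neg c + t = t + neg c := by
  apply lcan (a := c)
  rw [gLIP1 hneg hneg' hNK c t, hc (t + neg c), gRIP2 hneg hneg' hNK t c]

omit hneg hneg' hNK in
theorem comm_add {c d : Q} (hcN : c ∈ nucleus Q) (hdN : d ∈ nucleus Q)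
    (hc : ∀ t : Q, c + t = t + c) (hd : ∀ t : Q, d + t = t + d) (x : Q) :
    (c + d) + x = x + (c + d) := by
  calc (c + d) + x = c + (d + x) := n1 hcN d x
    _ = c + (x + d) := by rw [hd x]
    _ = (c + x) + d := (n1 hcN x d).symm
    _ = (x + c) + d := by rw [hc x]
    _ = x + (c + d) := n3 hdN x c

theorem negb_W (W B : Q) (hK : neg W + B ∈ moufangCenter Q) :
    W + neg B = neg (neg W + B) := by
  conv_lhs => rw [← gLIP1 hneg hneg' hNK W B, neg_add_rev hneg hneg' hNK W (neg W + B)]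
  rw [negk_comm hK hneg hneg' (neg W), gLIP1 hneg hneg' hNK W (neg (neg W + B))]

theorem C2 (Z v W B : Q) (hK : neg W + B ∈ moufangCenter Q)
    (hN6 : neg W + neg B ∈ nucleus Q) :
    (Z + neg (neg W + B)) + (v + (W + (neg W + B))) = (Z + v) + W := by
  rw [gLIP1 hneg hneg' hNK W B]
  have hni : ∀ p q : Q, neg p = neg q → p = q := fun p q h => by
    rw [← neg_neg hneg hneg' p, h, neg_neg hneg hneg']
  apply hni
  rw [neg_add_rev hneg hneg' hNK (Z + neg (neg W + B)) (v + B),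
    neg_add_rev hneg hneg' hNK v B, neg_add_rev hneg hneg' hNK Z (neg (neg W + B)),
    neg_neg hneg hneg' (neg W + B), neg_add_rev hneg hneg' hNK (Z + v) W,
    neg_add_rev hneg hneg' hNK Z v]
  have hKi : neg (neg W) + neg B ∈ moufangCenter Q := by
    rw [neg_neg hneg hneg' W, negb_W hneg hneg' hNK W B hK]
    exact negk_K hK hneg hneg'
  have hC := C1 hneg hneg' hNK (neg W) (neg B) (neg v) (neg Z) hKi hN6
  rw [neg_neg hneg hneg' W, negb_W hneg hneg' hNK W B hK,
    neg_neg hneg hneg' (neg W + B)] at hC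
  exact hC
end Misc

section Star
variable {neg : Q → Q} (hneg : ∀ x : Q, x + neg x = 0) (hneg' : ∀ x : Q, neg x + x = 0)
variable (hNK : ∀ a : Q, ∃ n ∈ nucleus Q, ∃ k ∈ moufangCenter Q, a = n + k)
include hneg hneg' hNK

theorem star5 (e fe ge u a v w : Q)
    (heN : e ∈ nucleus Q) (heC : e ∈ commutant Q)
    (hfeN : fe ∈ nucleus Q) (hfec : ∀ t : Q, fe + t = t + fe)
    (hgeN : ge ∈ nucleus Q) (hgec : ∀ t : Q, ge + t = t + ge)
    (hKa : neg u + a ∈ moufangCenter Q) (hNa : u + a ∈ nucleus Q) :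
    (u + e) + ((v + ge) + w)
      = (((a + fe) + v) + e) + ((((neg fe + neg a) + u) + ge) + w) := by
  have hnfeN := nN_neg hneg hneg' hfeN
  have hEN : e + ge ∈ nucleus Q := nN_add heN hgeN
  have hENc : ∀ t : Q, (e + ge) + t = t + (e + ge) :=
    comm_add heN hgeN (fun t => heC t) hgec
  have hFEN : fe + e ∈ nucleus Q := nN_add hfeN heN
  have hCN : neg fe + ge ∈ nucleus Q := nN_add hnfeN hgeN
  have hL : (u + e) + ((v + ge) + w) = (e + ge) + (u + (v + w)) := by
    calc (u + e) + ((v + ge) + w)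
        = (u + e) + ((ge + v) + w) := by rw [← hgec v]
      _ = (u + e) + (ge + (v + w)) := by rw [n1 hgeN v w]
      _ = u + (e + (ge + (v + w))) := n2 heN u _
      _ = u + ((e + ge) + (v + w)) := by rw [n1 heN ge (v + w)]
      _ = (u + (e + ge)) + (v + w) := (n2 hEN u (v + w)).symm
      _ = ((e + ge) + u) + (v + w) := by rw [hENc u]
      _ = (e + ge) + (u + (v + w)) := n1 hEN u (v + w)
  have negku : (neg fe + neg a) + u = neg fe + neg (neg u + a) := by
    rw [n1 hnfeN (neg a) u, nega_u hneg hneg' hNK u a]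
  have hEE : (fe + e) + (neg fe + ge) = e + ge := by
    calc (fe + e) + (neg fe + ge) = fe + (e + (neg fe + ge)) := n1 hfeN e _
      _ = fe + ((e + neg fe) + ge) := by rw [n1 heN (neg fe) ge]
      _ = fe + ((neg fe + e) + ge) := by rw [heC (neg fe)]
      _ = fe + (neg fe + (e + ge)) := by rw [n1 hnfeN e ge]
      _ = (fe + neg fe) + (e + ge) := (n1 hfeN (neg fe) (e + ge)).symm
      _ = 0 + (e + ge) := by rw [hneg fe]
      _ = e + ge := zadd _
  have hR : (((a + fe) + v) + e) + ((((neg fe + neg a) + u) + ge) + w)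
      = (e + ge) + (u + (v + w)) := by
    calc (((a + fe) + v) + e) + ((((neg fe + neg a) + u) + ge) + w)
        = (((a + fe) + v) + e) + (((neg fe + neg (neg u + a)) + ge) + w) := by rw [negku]
      _ = (((a + fe) + v) + e) + ((neg fe + (neg (neg u + a) + ge)) + w) := by
          rw [n1 hnfeN (neg (neg u + a)) ge]
      _ = (((a + fe) + v) + e) + ((neg fe + (ge + neg (neg u + a))) + w) := by
          rw [negk_comm hKa hneg hneg' ge]
      _ = (((a + fe) + v) + e) + (((neg fe + ge) + neg (neg u + a)) + w) := by
          rw [n1 hnfeN ge (neg (neg u + a))]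
      _ = (((a + fe) + v) + e) + ((neg fe + ge) + (neg (neg u + a) + w)) := by
          rw [n1 hCN (neg (neg u + a)) w]
      _ = ((a + (fe + v)) + e) + ((neg fe + ge) + (neg (neg u + a) + w)) := by
          rw [n2 hfeN a v]
      _ = ((a + (v + fe)) + e) + ((neg fe + ge) + (neg (neg u + a) + w)) := by
          rw [hfec v]
      _ = (((a + v) + fe) + e) + ((neg fe + ge) + (neg (neg u + a) + w)) := by
          rw [n3 hfeN a v]
      _ = ((a + v) + (fe + e)) + ((neg fe + ge) + (neg (neg u + a) + w)) := by
          rw [n3 heN (a + v) fe]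
      _ = (a + v) + ((fe + e) + ((neg fe + ge) + (neg (neg u + a) + w))) :=
          n2 hFEN (a + v) _
      _ = (a + v) + (((fe + e) + (neg fe + ge)) + (neg (neg u + a) + w)) := by
          rw [n1 hFEN (neg fe + ge) (neg (neg u + a) + w)]
      _ = (a + v) + ((e + ge) + (neg (neg u + a) + w)) := by rw [hEE]
      _ = ((a + v) + (e + ge)) + (neg (neg u + a) + w) := (n2 hEN (a + v) _).symm
      _ = ((e + ge) + (a + v)) + (neg (neg u + a) + w) := by rw [hENc (a + v)]
      _ = (e + ge) + ((a + v) + (neg (neg u + a) + w)) := n1 hEN (a + v) _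
      _ = (e + ge) + (u + (v + w)) := by rw [C1 hneg hneg' hNK u a v w hKa hNa]
  rw [hL, hR]

theorem star6 (e fe ge Z v W B : Q)
    (heN : e ∈ nucleus Q) (heC : e ∈ commutant Q)
    (hfeN : fe ∈ nucleus Q) (hfec : ∀ t : Q, fe + t = t + fe)
    (hgeN : ge ∈ nucleus Q) (hgec : ∀ t : Q, ge + t = t + ge)
    (hKb : neg W + B ∈ moufangCenter Q) (hN6 : neg W + neg B ∈ nucleus Q) :
    (((Z + fe) + v) + e) + W
      = (((Z + fe) + ((W + neg B) + neg ge)) + e) + ((v + ge) + B) := by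
  have hngeN := nN_neg hneg hneg' hgeN
  have hFEN : fe + e ∈ nucleus Q := nN_add hfeN heN
  have hFEc : ∀ t : Q, (fe + e) + t = t + (fe + e) :=
    comm_add hfeN heN hfec (fun t => heC t)
  have hL : (((Z + fe) + v) + e) + W = (fe + e) + ((Z + v) + W) := by
    calc (((Z + fe) + v) + e) + W
        = ((Z + (fe + v)) + e) + W := by rw [n2 hfeN Z v]
      _ = ((Z + (v + fe)) + e) + W := by rw [hfec v]
      _ = (((Z + v) + fe) + e) + W := by rw [n3 hfeN Z v]
      _ = ((Z + v) + (fe + e)) + W := by rw [n3 heN (Z + v) fe]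
      _ = (Z + v) + ((fe + e) + W) := n2 hFEN (Z + v) W
      _ = (Z + v) + (W + (fe + e)) := by rw [hFEc W]
      _ = ((Z + v) + W) + (fe + e) := (n3 hFEN (Z + v) W).symm
      _ = (fe + e) + ((Z + v) + W) := (hFEc ((Z + v) + W)).symm
  have hE26 : ((fe + neg ge) + e) + ge = fe + e := by
    calc ((fe + neg ge) + e) + ge
        = (fe + neg ge) + (e + ge) := n3 hgeN (fe + neg ge) e
      _ = fe + (neg ge + (e + ge)) := n1 hfeN (neg ge) (e + ge)
      _ = fe + ((neg ge + e) + ge) := by rw [n1 hngeN e ge]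
      _ = fe + ((e + neg ge) + ge) := by rw [← heC (neg ge)]
      _ = fe + (e + (neg ge + ge)) := by rw [n2 hngeN e ge]
      _ = fe + (e + 0) := by rw [hneg' ge]
      _ = fe + e := by rw [addz]
  have hR : (((Z + fe) + ((W + neg B) + neg ge)) + e) + ((v + ge) + B)
      = (fe + e) + ((Z + neg (neg W + B)) + (v + (W + (neg W + B)))) := by
    calc (((Z + fe) + ((W + neg B) + neg ge)) + e) + ((v + ge) + B)
        = (((Z + fe) + (neg (neg W + B) + neg ge)) + e) + ((v + ge) + B) := by
          rw [negb_W hneg hneg' hNK W B hKb]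
      _ = (((Z + fe) + (neg ge + neg (neg W + B))) + e) + ((v + ge) + B) := by
          rw [negk_comm hKb hneg hneg' (neg ge)]
      _ = ((((Z + fe) + neg ge) + neg (neg W + B)) + e) + ((v + ge) + B) := by
          rw [n2 hngeN (Z + fe) (neg (neg W + B))]
      _ = (((Z + (fe + neg ge)) + neg (neg W + B)) + e) + ((v + ge) + B) := by
          rw [n3 hngeN Z fe]
      _ = ((Z + (fe + neg ge)) + (neg (neg W + B) + e)) + ((v + ge) + B) := by
          rw [n3 heN (Z + (fe + neg ge)) (neg (neg W + B))]
      _ = ((Z + (fe + neg ge)) + (e + neg (neg W + B))) + ((v + ge) + B) := by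
          rw [← heC (neg (neg W + B))]
      _ = (((Z + (fe + neg ge)) + e) + neg (neg W + B)) + ((v + ge) + B) := by
          rw [n2 heN (Z + (fe + neg ge)) (neg (neg W + B))]
      _ = ((Z + ((fe + neg ge) + e)) + neg (neg W + B)) + ((v + ge) + B) := by
          rw [n3 heN Z (fe + neg ge)]
      _ = ((Z + ((fe + neg ge) + e)) + neg (neg W + B)) + ((v + ge) + (W + (neg W + B))) := by
          rw [gLIP1 hneg hneg' hNK W B]
      _ = ((Z + ((fe + neg ge) + e)) + neg (neg W + B)) + (v + (ge + (W + (neg W + B)))) := by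
          rw [n2 hgeN v (W + (neg W + B))]
      _ = ((Z + ((fe + neg ge) + e)) + neg (neg W + B)) + (v + ((ge + W) + (neg W + B))) := by
          rw [n1 hgeN W (neg W + B)]
      _ = ((Z + ((fe + neg ge) + e)) + neg (neg W + B)) + (v + ((W + ge) + (neg W + B))) := by
          rw [hgec W]
      _ = ((Z + ((fe + neg ge) + e)) + neg (neg W + B)) + (v + (W + (ge + (neg W + B)))) := by
          rw [n2 hgeN W (neg W + B)]
      _ = ((Z + ((fe + neg ge) + e)) + neg (neg W + B)) + (v + (W + ((neg W + B) + ge))) := by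
          rw [← k_comm hKb ge]
      _ = ((Z + ((fe + neg ge) + e)) + neg (neg W + B)) + (v + ((W + (neg W + B)) + ge)) := by
          rw [n3 hgeN W (neg W + B)]
      _ = ((Z + ((fe + neg ge) + e)) + neg (neg W + B)) + ((v + (W + (neg W + B))) + ge) := by
          rw [n3 hgeN v (W + (neg W + B))]
      _ = ((Z + ((fe + neg ge) + e)) + neg (neg W + B)) + (ge + (v + (W + (neg W + B)))) := by
          rw [← hgec (v + (W + (neg W + B)))]
      _ = (((Z + ((fe + neg ge) + e)) + neg (neg W + B)) + ge) + (v + (W + (neg W + B))) := by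
          rw [n2 hgeN ((Z + ((fe + neg ge) + e)) + neg (neg W + B)) (v + (W + (neg W + B)))]
      _ = ((Z + ((fe + neg ge) + e)) + (neg (neg W + B) + ge)) + (v + (W + (neg W + B))) := by
          rw [n3 hgeN (Z + ((fe + neg ge) + e)) (neg (neg W + B))]
      _ = ((Z + ((fe + neg ge) + e)) + (ge + neg (neg W + B))) + (v + (W + (neg W + B))) := by
          rw [negk_comm hKb hneg hneg' ge]
      _ = (((Z + ((fe + neg ge) + e)) + ge) + neg (neg W + B)) + (v + (W + (neg W + B))) := by
          rw [n2 hgeN (Z + ((fe + neg ge) + e)) (neg (neg W + B))]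
      _ = ((Z + (((fe + neg ge) + e) + ge)) + neg (neg W + B)) + (v + (W + (neg W + B))) := by
          rw [n3 hgeN Z ((fe + neg ge) + e)]
      _ = ((Z + (fe + e)) + neg (neg W + B)) + (v + (W + (neg W + B))) := by rw [hE26]
      _ = (((fe + e) + Z) + neg (neg W + B)) + (v + (W + (neg W + B))) := by
          rw [← hFEc Z]
      _ = ((fe + e) + (Z + neg (neg W + B))) + (v + (W + (neg W + B))) := by
          rw [n1 hFEN Z (neg (neg W + B))]
      _ = (fe + e) + ((Z + neg (neg W + B)) + (v + (W + (neg W + B)))) :=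
          n1 hFEN (Z + neg (neg W + B)) (v + (W + (neg W + B)))
  rw [hL, hR, C2 hneg hneg' hNK Z v W B hKb hN6]

end Star

end NKAux



open NKAux

theorem linear_over_NK_is_F (Q : Type u) [Loop Q]
    (hNK : ∀ a : Q, ∃ n ∈ nucleus Q, ∃ k ∈ moufangCenter Q, a = n + k)
    (neg : Q → Q) (hneg : ∀ x : Q, x + neg x = 0) (hneg' : ∀ x : Q, neg x + x = 0)
    (f g : Q ≃ Q) (hf : ∀ x y : Q, f (x + y) = f x + f y)
    (hg : ∀ x y : Q, g (x + y) = g x + g y)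
    (hfg : ∀ x : Q, f (g x) = g (f x))
    (e : Q) (heN : e ∈ nucleus Q) (heC : e ∈ commutant Q)
    (hfN : ∀ x : Q, x + f x ∈ nucleus Q) (hgN : ∀ x : Q, x + g x ∈ nucleus Q)
    (hfK : ∀ x : Q, neg x + f x ∈ moufangCenter Q)
    (hgK : ∀ x : Q, neg x + g x ∈ moufangCenter Q) :
    let mul : Q → Q → Q := fun x y => (f x + e) + g y
    let alpha : Q → Q := fun x => (neg (g.symm e) + neg (g.symm (f x))) + g.symm x
    let beta : Q → Q := fun x => (f.symm x + neg (f.symm (g x))) + neg (f.symm e)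
    (∀ a : Q, Function.Bijective (mul a)) ∧
      (∀ a : Q, Function.Bijective (fun x => mul x a)) ∧
      (∀ x : Q, mul x (alpha x) = x) ∧
      (∀ x : Q, mul (beta x) x = x) ∧
      (∀ x y z : Q, mul x (mul y z) = mul (mul x y) (mul (alpha x) z)) ∧
      (∀ x y z : Q, mul (mul z y) x = mul (mul z (beta x)) (mul y x)) := by
  intro mul alpha beta
  have hfneg : ∀ t : Q, f (neg t) = neg (f t) := hom_neg f hf hneg hneg'
  have hgneg : ∀ t : Q, g (neg t) = neg (g t) := hom_neg g hg hneg hneg'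
  have heNn : neg e ∈ nucleus Q := nN_neg hneg hneg' heN
  have hfeN : f e ∈ nucleus Q := hom_nuc f hf heN
  have hfec : ∀ t : Q, f e + t = t + f e := hom_comm f hf heC
  have hgeN : g e ∈ nucleus Q := hom_nuc g hg heN
  have hgec : ∀ t : Q, g e + t = t + g e := hom_comm g hg heC
  refine ⟨?_, ?_, ?_, ?_, ?_, ?_⟩
  · intro a
    have h : (mul a) = (fun t => (f a + e) + t) ∘ (g : Q → Q) := rfl
    rw [h]
    exact (Loop.addLeft_bijective (f a + e)).comp g.bijective
  · intro a
    have h : (fun x => mul x a) =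
        (fun t => t + g a) ∘ ((fun t => t + e) ∘ (f : Q → Q)) := rfl
    rw [h]
    exact (Loop.addRight_bijective (g a)).comp
      ((Loop.addRight_bijective e).comp f.bijective)
  · intro x
    show (f x + e) + g ((neg (g.symm e) + neg (g.symm (f x))) + g.symm x) = x
    rw [hg (neg (g.symm e) + neg (g.symm (f x))) (g.symm x),
      hg (neg (g.symm e)) (neg (g.symm (f x))), g.apply_symm_apply,
      hgneg (g.symm e), hgneg (g.symm (f x)), g.apply_symm_apply, g.apply_symm_apply]
    rw [n1 heNn (neg (f x)) x, ← n2 heNn (f x + e) (neg (f x) + x),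
      n3 heNn (f x) e, hneg e, addz, gLIP1 hneg hneg' hNK (f x) x]
  · intro x
    show (f ((f.symm x + neg (f.symm (g x))) + neg (f.symm e)) + e) + g x = x
    rw [hf (f.symm x + neg (f.symm (g x))) (neg (f.symm e)),
      hf (f.symm x) (neg (f.symm (g x))), f.apply_symm_apply,
      hfneg (f.symm (g x)), hfneg (f.symm e), f.apply_symm_apply, f.apply_symm_apply]
    rw [n3 heN (x + neg (g x)) (neg e), hneg' e, addz,
      gRIP2 hneg hneg' hNK x (g x)]
  · intro x y z
    show (f x + e) + g ((f y + e) + g z)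
        = (f ((f x + e) + g y) + e) +
          g ((f ((neg (g.symm e) + neg (g.symm (f x))) + g.symm x) + e) + g z)
    have hgalpha : g ((neg (g.symm e) + neg (g.symm (f x))) + g.symm x)
        = (neg e + neg (f x)) + x := by
      rw [hg (neg (g.symm e) + neg (g.symm (f x))) (g.symm x),
        hg (neg (g.symm e)) (neg (g.symm (f x))), g.apply_symm_apply,
        hgneg (g.symm e), hgneg (g.symm (f x)), g.apply_symm_apply, g.apply_symm_apply]
    rw [hg (f y + e) (g z), hg (f y) e,
      hf (f x + e) (g y), hf (f x) e, hfg y,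
      hg (f ((neg (g.symm e) + neg (g.symm (f x))) + g.symm x) + e) (g z),
      hg (f ((neg (g.symm e) + neg (g.symm (f x))) + g.symm x)) e,
      ← hfg ((neg (g.symm e) + neg (g.symm (f x))) + g.symm x),
      hgalpha, hf (neg e + neg (f x)) x, hf (neg e) (neg (f x)),
      hfneg e, hfneg (f x)]
    exact star5 hneg hneg' hNK e (f e) (g e) (f x) (f (f x)) (g (f y)) (g (g z))
      heN heC hfeN hfec hgeN hgec (hfK (f x)) (hfN (f x))
  · intro x y z
    show (f ((f z + e) + g y) + e) + g x
        = (f ((f z + e) + g ((f.symm x + neg (f.symm (g x))) + neg (f.symm e))) + e) +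
          g ((f y + e) + g x)
    have hfbeta : f ((f.symm x + neg (f.symm (g x))) + neg (f.symm e))
        = (x + neg (g x)) + neg e := by
      rw [hf (f.symm x + neg (f.symm (g x))) (neg (f.symm e)),
        hf (f.symm x) (neg (f.symm (g x))), f.apply_symm_apply,
        hfneg (f.symm (g x)), hfneg (f.symm e), f.apply_symm_apply, f.apply_symm_apply]
    have hN6 : neg (g x) + neg (g (g x)) ∈ nucleus Q := by
      have h := hgN (neg (g x))
      rwa [hgneg (g x)] at h
    rw [hf (f z + e) (g y), hf (f z) e, hfg y,
      hf (f z + e) (g ((f.symm x + neg (f.symm (g x))) + neg (f.symm e))),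
      hfg ((f.symm x + neg (f.symm (g x))) + neg (f.symm e)),
      hfbeta, hf (f z) e, hg (x + neg (g x)) (neg e), hg x (neg (g x)),
      hgneg (g x), hgneg e,
      hg (f y + e) (g x), hg (f y) e]
    exact star6 hneg hneg' hNK e (f e) (g e) (f (f z)) (g (f y)) (g x) (g (g x))
      heN heC hfeN hfec hgeN hgec (hgK (g x)) hN6
end
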